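/- arXiv:1303.2598 — 2 statements merged into one kernel-verified Lean document; each statement's English description precedes it below -/
import Mathlib

section
/- Let n∈ω and let L be a countable linear order partitioned into consecutive convex parts L_0, L_1, …, L_n (every element of L_i precedes every element of L_j whenever i<j), where for each i ≤ n the induced order on L_i is the ω-sum of a sequence of members of ℋ satisfying condition (*), and for each i < n the lexicographic sum L_i + L_{i+1} is not order-isomorphic to any member of ℋ. Then: (a) every order embedding f : L → L satisfies f[L_i] ⊆ L_i for each i ≤ n; and (b) a subset A ⊆ L belongs to ℙ(L) if and only if A = ⋃_{i≤n} C_i, where for each i ≤ n the set C_i ⊆ L_i has induced order isomorphic to that of L_i. -/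
open Set

/-- A linear order is scattered iff the rationals do not order-embed into it. -/
def IsScattered (L : Type*) [LinearOrder L] : Prop :=
  IsEmpty (ℚ ↪o L)

/-- `Copies L` is the set of all subsets of `L` whose induced order is
order-isomorphic to `L`. -/
def Copies (L : Type*) [LinearOrder L] : Set (Set L) :=
  { A | Nonempty (↥A ≃o L) }

/-- The separative-modification order `≤*` on subsets of `L`:
`A ≤* B` iff every copy of `L` inside `A` contains a copy of `L` inside `C ∩ B`. -/
def copyLE {L : Type*} [LinearOrder L] (A B : Set L) : Prop :=
  ∀ C ∈ Copies L, C ⊆ A → ∃ D ∈ Copies L, D ⊆ C ∩ B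

/-- The separative-modification order on an abstract partial order. -/
def smLE {P : Type*} [PartialOrder P] (p q : P) : Prop :=
  ∀ r ≤ p, ∃ s ≤ r, s ≤ q

/-- The class ℋ of hereditarily additively indecomposable countable linear
orders, realized as subsets of ℚ (every countable linear order embeds in ℚ):
the smallest class containing the singletons, closed under order-isomorphism,
and closed under ω-sums and ω*-sums of sequences of members satisfying
condition (*) (each member embeds into infinitely many members of the sequence). -/
inductive InH : Set ℚ → Prop
  | singleton (q : ℚ) : InH {q}
  | iso {A B : Set ℚ} : InH A → Nonempty (↥A ≃o ↥B) → InH B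
  | omegaSum (M : ℕ → Set ℚ)
      (hne : ∀ i, (M i).Nonempty)
      (hH : ∀ i, InH (M i))
      (hstar : ∀ i, {j | Nonempty (↥(M i) ↪o ↥(M j))}.Infinite)
      (hlt : ∀ i j, i < j → ∀ x ∈ M i, ∀ y ∈ M j, x < y) :
      InH (⋃ i, M i)
  | omegaStarSum (M : ℕ → Set ℚ)
      (hne : ∀ i, (M i).Nonempty)
      (hH : ∀ i, InH (M i))
      (hstar : ∀ i, {j | Nonempty (↥(M i) ↪o ↥(M j))}.Infinite)
      (hlt : ∀ i j, i < j → ∀ x ∈ M i, ∀ y ∈ M j, y < x) :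
      InH (⋃ i, M i)

/-- A subset of a linear order whose induced order belongs to ℋ. -/
def SetInH {L : Type*} [LinearOrder L] (A : Set L) : Prop :=
  ∃ M : Set ℚ, InH M ∧ Nonempty (↥A ≃o ↥M)

/-- A linear order belonging to ℋ (up to order-isomorphism). -/
def TypeInH (L : Type*) [LinearOrder L] : Prop :=
  ∃ M : Set ℚ, InH M ∧ Nonempty (L ≃o ↥M)

/-- `S` is the ω-sum of the sequence `Li` of members of ℋ satisfying (*):
`S` is the disjoint union of the nonempty sets `Li i`, every element of `Li i`
precedes every element of `Li j` for `i < j`, each `Li i` has induced order in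
ℋ, and each `Li i` order-embeds into `Li j` for infinitely many `j`. -/
structure IsOmegaSumH {L : Type*} [LinearOrder L] (S : Set L) (Li : ℕ → Set L) : Prop where
  union : (⋃ i, Li i) = S
  nonemp : ∀ i, (Li i).Nonempty
  disj : ∀ i j, i ≠ j → Disjoint (Li i) (Li j)
  mono : ∀ i j, i < j → ∀ x ∈ Li i, ∀ y ∈ Li j, x < y
  inH : ∀ i, SetInH (Li i)
  star : ∀ i, {j | Nonempty (↥(Li i) ↪o ↥(Li j))}.Infinite

/-- `S` is the ω*-sum of the sequence `Li` of members of ℋ satisfying (*). -/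
structure IsOmegaStarSumH {L : Type*} [LinearOrder L] (S : Set L) (Li : ℕ → Set L) : Prop where
  union : (⋃ i, Li i) = S
  nonemp : ∀ i, (Li i).Nonempty
  disj : ∀ i j, i ≠ j → Disjoint (Li i) (Li j)
  mono : ∀ i j, i < j → ∀ x ∈ Li i, ∀ y ∈ Li j, y < x
  inH : ∀ i, SetInH (Li i)
  star : ∀ i, {j | Nonempty (↥(Li i) ↪o ↥(Li j))}.Infinite

/-- A partition of a linear order into `k` consecutive convex parts, each of
whose induced orders belongs to ℋ. -/
def HPartitionInH {L : Type*} [LinearOrder L] (k : ℕ) (P : ℕ → Set L) : Prop :=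
  (⋃ i < k, P i) = univ ∧ (∀ i < k, (P i).Nonempty) ∧
  (∀ i < k, ∀ j < k, i ≠ j → Disjoint (P i) (P j)) ∧
  (∀ i < k, ∀ j < k, i < j → ∀ x ∈ P i, ∀ y ∈ P j, x < y) ∧
  (∀ i < k, SetInH (P i))

section HAux

open Set

variable {γ : Type*} [LinearOrder γ]

/-- Membership in at most one part of an increasing family. -/
theorem HAux.part_unique {A : ℕ → Set γ}
    (hlt : ∀ i j, i < j → ∀ x ∈ A i, ∀ y ∈ A j, x < y)
    {x : γ} {i j : ℕ} (hi : x ∈ A i) (hj : x ∈ A j) : i = j := by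
  rcases lt_trichotomy i j with h | h | h
  · exact absurd (hlt i j h x hi x hj) (lt_irrefl x)
  · exact h
  · exact absurd (hlt j i h x hj x hi) (lt_irrefl x)

theorem HAux.idx_le_of_le {A : ℕ → Set γ}
    (hlt : ∀ i j, i < j → ∀ x ∈ A i, ∀ y ∈ A j, x < y)
    {x y : γ} {i j : ℕ} (hi : x ∈ A i) (hj : y ∈ A j) (hxy : x ≤ y) : i ≤ j := by
  by_contra h
  push_neg at h
  exact absurd hxy (not_le.mpr (hlt j i h y hj x hi))

theorem HAux.idx_le_of_le_rev {A : ℕ → Set γ}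
    (hlt : ∀ i j, i < j → ∀ x ∈ A i, ∀ y ∈ A j, y < x)
    {x y : γ} {i j : ℕ} (hi : x ∈ A i) (hj : y ∈ A j) (hxy : x ≤ y) : j ≤ i := by
  by_contra h
  push_neg at h
  exact absurd hxy (not_le.mpr (hlt i j h x hi y hj))

theorem HAux.sandwich {A : ℕ → Set γ}
    (hlt : ∀ i j, i < j → ∀ x ∈ A i, ∀ y ∈ A j, x < y)
    {a b y : γ} {u k : ℕ} (ha : a ∈ A u) (hb : b ∈ A u) (hy : y ∈ A k)
    (h1 : a ≤ y) (h2 : y ≤ b) : k = u :=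
  le_antisymm (HAux.idx_le_of_le hlt hy hb h2) (HAux.idx_le_of_le hlt ha hy h1)

theorem HAux.sandwich_rev {A : ℕ → Set γ}
    (hlt : ∀ i j, i < j → ∀ x ∈ A i, ∀ y ∈ A j, y < x)
    {a b y : γ} {u k : ℕ} (ha : a ∈ A u) (hb : b ∈ A u) (hy : y ∈ A k)
    (h1 : a ≤ y) (h2 : y ≤ b) : k = u :=
  le_antisymm (HAux.idx_le_of_le_rev hlt ha hy h1) (HAux.idx_le_of_le_rev hlt hy hb h2)

/-- Strictly monotone selection from a family of infinite sets of naturals,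
staying above a threshold. -/
theorem HAux.selection (Sets : ℕ → Set ℕ) (h : ∀ t, (Sets t).Infinite) (T : ℕ) :
    ∃ js : ℕ → ℕ, StrictMono js ∧ (∀ t, js t ∈ Sets t) ∧ ∀ t, T < js t := by
  classical
  let js : ℕ → ℕ := fun t => Nat.rec (Classical.choose ((h 0).exists_gt T))
    (fun t' prev => Classical.choose ((h (t' + 1)).exists_gt prev)) t
  have h0 : js 0 ∈ Sets 0 ∧ T < js 0 := by
    obtain ⟨h1, h2⟩ := Classical.choose_spec ((h 0).exists_gt T)
    exact ⟨h1, h2⟩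
  have hsucc : ∀ t, js (t + 1) ∈ Sets (t + 1) ∧ js t < js (t + 1) := by
    intro t
    obtain ⟨h1, h2⟩ := Classical.choose_spec ((h (t + 1)).exists_gt (js t))
    exact ⟨h1, h2⟩
  have hsm : StrictMono js := strictMono_nat_of_lt_succ fun t => (hsucc t).2
  refine ⟨js, hsm, ?_, ?_⟩
  · intro t
    cases t with
    | zero => exact h0.1
    | succ t' => exact (hsucc t').1
  · intro t
    calc T < js 0 := h0.2
    _ ≤ js t := hsm.monotone (Nat.zero_le t)

/-- Helper for dependent rewriting of glued embeddings. -/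
theorem HAux.dep_lt {A : ℕ → Set γ} {β : Type*} [Preorder β] {B : ℕ → Set β}
    (g : ∀ t, ↥(A t) ↪o ↥(B t)) {t t' : ℕ} (h : t = t')
    (a : ↥(A t)) (b : ↥(A t')) (hab : (a : γ) < (b : γ)) :
    ((g t a : β) : β) < ((g t' b : β) : β) := by
  subst h
  exact (g t).strictMono (Subtype.mk_lt_mk.mpr hab)

/-- Glue embeddings of the parts along a strictly monotone reindexing
(increasing parts on both sides). -/
theorem HAux.glue {A : ℕ → Set γ} {β : Type*} [LinearOrder β] {B : ℕ → Set β}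
    (hltA : ∀ i j, i < j → ∀ x ∈ A i, ∀ y ∈ A j, x < y)
    (hltB : ∀ i j, i < j → ∀ x ∈ B i, ∀ y ∈ B j, x < y)
    (j : ℕ → ℕ) (hj : StrictMono j)
    (g : ∀ t, ↥(A t) ↪o ↥(B (j t))) :
    ∃ e : ↥(⋃ t, A t) ↪o ↥(⋃ t, B t),
      ∀ (x : ↥(⋃ t, A t)) (t : ℕ), (x : γ) ∈ A t → ((e x : β) ∈ B (j t)) := by
  classical
  have hsel : ∀ x : ↥(⋃ t, A t), ∃ t, (x : γ) ∈ A t := fun x => mem_iUnion.mp x.2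
  choose idx hidx using hsel
  set F : ↥(⋃ t, A t) → ↥(⋃ t, B t) := fun x =>
    ⟨(g (idx x) ⟨(x : γ), hidx x⟩ : ↥(B (j (idx x)))), mem_iUnion.mpr ⟨j (idx x), (g (idx x) ⟨(x : γ), hidx x⟩).2⟩⟩ with hF
  have hmem : ∀ x, (F x : β) ∈ B (j (idx x)) := fun x => (g (idx x) ⟨(x : γ), hidx x⟩).2
  have hsm : StrictMono F := by
    intro x y hxy
    have hxy' : (x : γ) < (y : γ) := hxy
    have hle : idx x ≤ idx y := HAux.idx_le_of_le hltA (hidx x) (hidx y) hxy'.le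
    rcases eq_or_lt_of_le hle with heq | hlt'
    · have : ((g (idx x) ⟨(x : γ), hidx x⟩ : ↥(B (j (idx x)))) : β)
          < ((g (idx y) ⟨(y : γ), hidx y⟩ : ↥(B (j (idx y)))) : β) := by
        exact HAux.dep_lt (fun t => g t) (by rw [heq]) _ _ hxy'
      exact Subtype.mk_lt_mk.mpr this
    · exact Subtype.mk_lt_mk.mpr
        (hltB _ _ (hj hlt') _ (hmem x) _ (hmem y))
  refine ⟨OrderEmbedding.ofStrictMono F hsm, ?_⟩
  intro x t hxt
  have : idx x = t := HAux.part_unique hltA (hidx x) hxt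
  rw [← this]
  exact hmem x

/-- Dual gluing: codomain parts are decreasing. -/
theorem HAux.glue_rev {A : ℕ → Set γ} {β : Type*} [LinearOrder β] {B : ℕ → Set β}
    (hltA : ∀ i j, i < j → ∀ x ∈ A i, ∀ y ∈ A j, y < x)
    (hltB : ∀ i j, i < j → ∀ x ∈ B i, ∀ y ∈ B j, y < x)
    (j : ℕ → ℕ) (hj : StrictMono j)
    (g : ∀ t, ↥(A t) ↪o ↥(B (j t))) :
    ∃ e : ↥(⋃ t, A t) ↪o ↥(⋃ t, B t),
      ∀ (x : ↥(⋃ t, A t)) (t : ℕ), (x : γ) ∈ A t → ((e x : β) ∈ B (j t)) := by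
  classical
  have hsel : ∀ x : ↥(⋃ t, A t), ∃ t, (x : γ) ∈ A t := fun x => mem_iUnion.mp x.2
  choose idx hidx using hsel
  set F : ↥(⋃ t, A t) → ↥(⋃ t, B t) := fun x =>
    ⟨(g (idx x) ⟨(x : γ), hidx x⟩ : ↥(B (j (idx x)))), mem_iUnion.mpr ⟨j (idx x), (g (idx x) ⟨(x : γ), hidx x⟩).2⟩⟩ with hF
  have hmem : ∀ x, (F x : β) ∈ B (j (idx x)) := fun x => (g (idx x) ⟨(x : γ), hidx x⟩).2
  have hpu : ∀ {x : γ} {i j' : ℕ}, x ∈ A i → x ∈ A j' → i = j' := by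
    intro x i j' hi hj'
    rcases lt_trichotomy i j' with h | h | h
    · exact absurd (hltA i j' h x hi x hj') (lt_irrefl x)
    · exact h
    · exact absurd (hltA j' i h x hj' x hi) (lt_irrefl x)
  have hsm : StrictMono F := by
    intro x y hxy
    have hxy' : (x : γ) < (y : γ) := hxy
    have hle : idx y ≤ idx x := HAux.idx_le_of_le_rev hltA (hidx x) (hidx y) hxy'.le
    rcases eq_or_lt_of_le hle with heq | hlt'
    · have : ((g (idx x) ⟨(x : γ), hidx x⟩ : ↥(B (j (idx x)))) : β)
          < ((g (idx y) ⟨(y : γ), hidx y⟩ : ↥(B (j (idx y)))) : β) := by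
        exact HAux.dep_lt (fun t => g t) (by rw [heq]) _ _ hxy'
      exact Subtype.mk_lt_mk.mpr this
    · exact Subtype.mk_lt_mk.mpr
        (hltB _ _ (hj hlt') _ (hmem y) _ (hmem x))
  refine ⟨OrderEmbedding.ofStrictMono F hsm, ?_⟩
  intro x t hxt
  have : idx x = t := hpu (hidx x) hxt
  rw [← this]
  exact hmem x

end HAux
section HAux2

open Set

variable {γ : Type*} [LinearOrder γ]

/-- An ω-sum with (*) embeds into its tail beyond any index. -/
theorem HAux.rind {A : ℕ → Set γ}
    (hlt : ∀ i j, i < j → ∀ x ∈ A i, ∀ y ∈ A j, x < y)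
    (hstar : ∀ t, {j | Nonempty (↥(A t) ↪o ↥(A j))}.Infinite)
    (k : ℕ) :
    ∃ r : ↥(⋃ t, A t) ↪o ↥(⋃ t, A t), ∀ x, ∃ i, k < i ∧ (r x : γ) ∈ A i := by
  obtain ⟨js, hsm, hmem, hgt⟩ := HAux.selection _ hstar k
  have g : ∀ t, ↥(A t) ↪o ↥(A (js t)) := fun t => (hmem t).some
  obtain ⟨e, he⟩ := HAux.glue hlt hlt js hsm g
  refine ⟨e, fun x => ?_⟩
  obtain ⟨t, ht⟩ := mem_iUnion.mp x.2
  exact ⟨js t, hgt t, he x t ht⟩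

/-- An ω*-sum with (*) embeds into its tail beyond any index. -/
theorem HAux.lind {A : ℕ → Set γ}
    (hlt : ∀ i j, i < j → ∀ x ∈ A i, ∀ y ∈ A j, y < x)
    (hstar : ∀ t, {j | Nonempty (↥(A t) ↪o ↥(A j))}.Infinite)
    (k : ℕ) :
    ∃ r : ↥(⋃ t, A t) ↪o ↥(⋃ t, A t), ∀ x, ∃ i, k < i ∧ (r x : γ) ∈ A i := by
  obtain ⟨js, hsm, hmem, hgt⟩ := HAux.selection _ hstar k
  have g : ∀ t, ↥(A t) ↪o ↥(A (js t)) := fun t => (hmem t).some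
  obtain ⟨e, he⟩ := HAux.glue_rev hlt hlt js hsm g
  refine ⟨e, fun x => ?_⟩
  obtain ⟨t, ht⟩ := mem_iUnion.mp x.2
  exact ⟨js t, hgt t, he x t ht⟩

/-- A set carries an increasing ω-chain of copies of itself. -/
def StackedSelf (N : Set γ) : Prop :=
  ∃ e : ℕ → (↥N ↪o ↥N), ∀ k l, k < l → ∀ a b, ((e k a : γ) < (e l b : γ))

theorem StackedSelf.of_orderIso {δ : Type*} [LinearOrder δ] {N : Set γ} {M : Set δ}
    (φ : ↥N ≃o ↥M) (h : StackedSelf N) : StackedSelf M := by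
  obtain ⟨e, he⟩ := h
  refine ⟨fun k => (φ.symm.toOrderEmbedding.trans (e k)).trans φ.toOrderEmbedding, ?_⟩
  intro k l hkl a b
  have := he k l hkl (φ.symm a) (φ.symm b)
  have h2 : e k (φ.symm a) < e l (φ.symm b) := Subtype.mk_lt_mk.mpr this
  have h3 : φ (e k (φ.symm a)) < φ (e l (φ.symm b)) := φ.strictMono h2
  exact h3

/-- Key block analysis: a self-embedding of an ω-sum with (*) which is bounded
above yields a stacked chain of copies of one of the parts inside itself. -/
theorem HAux.block {A : ℕ → Set γ}
    (hne : ∀ t, (A t).Nonempty)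
    (hlt : ∀ i j, i < j → ∀ x ∈ A i, ∀ y ∈ A j, x < y)
    (hstar : ∀ t, {j | Nonempty (↥(A t) ↪o ↥(A j))}.Infinite)
    (e : ↥(⋃ t, A t) ↪o ↥(⋃ t, A t)) (z : ↥(⋃ t, A t))
    (hb : ∀ x, (e x : γ) < (z : γ)) :
    ∃ u, StackedSelf (A u) := by
  classical
  choose x hx using hne
  have hxS : ∀ t, x t ∈ ⋃ t', A t' := fun t => mem_iUnion.mpr ⟨t, hx t⟩
  set xx : ℕ → ↥(⋃ t', A t') := fun t => ⟨x t, hxS t⟩ with hxx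
  have hm : ∀ t, ∃ i, ((e (xx t)) : γ) ∈ A i := fun t => mem_iUnion.mp (e (xx t)).2
  choose m hmm using hm
  obtain ⟨σ, hσ⟩ := mem_iUnion.mp z.2
  have hmb : ∀ t, m t ≤ σ := fun t =>
    HAux.idx_le_of_le hlt (hmm t) hσ (hb (xx t)).le
  have hmono : Monotone m := by
    intro s t hst
    rcases eq_or_lt_of_le hst with rfl | hst'
    · exact le_rfl
    · have hxlt : xx s < xx t := Subtype.mk_lt_mk.mpr (hlt s t hst' _ (hx s) _ (hx t))
      exact HAux.idx_le_of_le hlt (hmm s) (hmm t) (le_of_lt (e.strictMono hxlt))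
  -- eventual constancy
  have hbdd : BddAbove (Set.range m) := ⟨σ, by rintro _ ⟨t, rfl⟩; exact hmb t⟩
  have hne' : (Set.range m).Nonempty := ⟨m 0, 0, rfl⟩
  obtain ⟨T₀, hT₀⟩ : ∃ T₀, m T₀ = sSup (Set.range m) := by
    obtain ⟨T₀, h⟩ := Nat.sSup_mem hne' hbdd
    exact ⟨T₀, h⟩
  set u := sSup (Set.range m) with hu
  have hconst : ∀ t, T₀ ≤ t → m t = u := by
    intro t ht
    refine le_antisymm (le_csSup hbdd ⟨t, rfl⟩) ?_
    rw [← hT₀]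
    exact hmono ht
  -- containment of images of late parts
  have hcont : ∀ t, T₀ < t → ∀ (w : ↥(⋃ t', A t')), (w : γ) ∈ A t → ((e w) : γ) ∈ A u := by
    intro t ht w hw
    obtain ⟨t', rfl⟩ : ∃ t', t = t' + 1 := ⟨t - 1, (Nat.succ_pred_eq_of_pos (by omega)).symm⟩
    have h1 : x t' < (w : γ) := hlt t' (t' + 1) (Nat.lt_succ_self _) _ (hx t') _ hw
    have h2 : (w : γ) < x (t' + 2) := hlt (t' + 1) (t' + 2) (Nat.lt_succ_self _) _ hw _ (hx (t' + 2))
    have hew1 : ((e (xx t')) : γ) ≤ ((e w) : γ) :=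
      le_of_lt (e.strictMono (Subtype.mk_lt_mk.mpr h1))
    have hew2 : ((e w) : γ) ≤ ((e (xx (t' + 2))) : γ) :=
      le_of_lt (e.strictMono (Subtype.mk_lt_mk.mpr h2))
    obtain ⟨kk, hkk⟩ := mem_iUnion.mp (e w).2
    have hm1 : ((e (xx t')) : γ) ∈ A u := by
      have := hmm t'; rwa [hconst t' (Nat.lt_succ_iff.mp ht)] at this
    have hm2 : ((e (xx (t' + 2))) : γ) ∈ A u := by
      have := hmm (t' + 2)
      rwa [hconst (t' + 2) (by omega)] at this
    have : kk = u := HAux.sandwich hlt hm1 hm2 hkk hew1 hew2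
    rwa [this] at hkk
  -- stacking
  obtain ⟨js, hsm, hmemb, hgt⟩ := HAux.selection (fun _ => {j | Nonempty (↥(A u) ↪o ↥(A j))}) (fun _ => hstar u) T₀
  have g : ∀ kk, ↥(A u) ↪o ↥(A (js kk)) := fun kk => (hmemb kk).some
  have hSmem : ∀ (kk : ℕ) (a : ↥(A u)), ((g kk a : γ)) ∈ ⋃ t', A t' :=
    fun kk a => mem_iUnion.mpr ⟨js kk, (g kk a).2⟩
  set h : ℕ → ↥(A u) → ↥(A u) := fun kk a =>
    ⟨(e ⟨(g kk a : γ), hSmem kk a⟩ : γ),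
      hcont (js kk) (hgt kk) _ (g kk a).2⟩ with hh
  have hhsm : ∀ kk, StrictMono (h kk) := by
    intro kk a b hab
    have : (g kk a : γ) < (g kk b : γ) := (g kk).strictMono hab
    exact Subtype.mk_lt_mk.mpr (e.strictMono (Subtype.mk_lt_mk.mpr this))
  refine ⟨u, fun kk => OrderEmbedding.ofStrictMono (h kk) (hhsm kk), ?_⟩
  intro k l hkl a b
  have h1 : (g k a : γ) < (g l b : γ) :=
    hlt (js k) (js l) (hsm hkl) _ (g k a).2 _ (g l b).2
  exact e.strictMono (Subtype.mk_lt_mk.mpr h1)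

end HAux2
section HAux3

open Set

/-- No member of ℋ contains an increasing ω-chain of copies of itself. -/
theorem InH.not_stackedSelf {N : Set ℚ} (h : InH N) : ¬ StackedSelf N := by
  induction h with
  | singleton q =>
    rintro ⟨e, he⟩
    have a : ↥({q} : Set ℚ) := ⟨q, mem_singleton q⟩
    have h1 := he 0 1 Nat.zero_lt_one a a
    have h2 : ((e 0 a : ℚ)) = q := (e 0 a).2
    have h3 : ((e 1 a : ℚ)) = q := (e 1 a).2
    rw [h2, h3] at h1
    exact lt_irrefl q h1
  | iso hA hiso ih =>
    intro hB
    exact ih (hB.of_orderIso hiso.some.symm)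
  | omegaSum M hne hH hstar hlt ih =>
    rintro ⟨e, he⟩
    have a₀ : ↥(⋃ t, M t) := ⟨(hne 0).some, mem_iUnion.mpr ⟨0, (hne 0).some_mem⟩⟩
    have hb : ∀ x, ((e 0) x : ℚ) < ((e 1) a₀ : ℚ) := fun x => he 0 1 Nat.zero_lt_one x a₀
    obtain ⟨u, hu⟩ := HAux.block hne hlt hstar (e 0) (e 1 a₀) hb
    exact ih u hu
  | omegaStarSum M hne hH hstar hlt ih =>
    rintro ⟨e, he⟩
    classical
    have a₀ : ↥(⋃ t, M t) := ⟨(hne 0).some, mem_iUnion.mpr ⟨0, (hne 0).some_mem⟩⟩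
    have hm : ∀ k, ∃ i, ((e k a₀ : ℚ)) ∈ M i := fun k => mem_iUnion.mp (e k a₀).2
    choose m hmm using hm
    have hanti : ∀ k l, k < l → m l ≤ m k := by
      intro k l hkl
      exact HAux.idx_le_of_le_rev hlt (hmm k) (hmm l) (he k l hkl a₀ a₀).le
    obtain ⟨K, hK⟩ : ∃ K, m K = sInf (Set.range m) := by
      obtain ⟨K, h⟩ := Nat.sInf_mem (⟨m 0, 0, rfl⟩ : (Set.range m).Nonempty)
      exact ⟨K, h⟩
    set u := sInf (Set.range m) with hu
    have hconst : ∀ k, K ≤ k → m k = u := by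
      intro k hk
      refine le_antisymm ?_ (Nat.sInf_le ⟨k, rfl⟩)
      rcases eq_or_lt_of_le hk with rfl | h'
      · exact le_of_eq hK
      · exact le_trans (hanti K k h') (le_of_eq hK)
    have hmap : ∀ (mm : ℕ) (a : ↥(⋃ t, M t)), ((e (K + 1 + mm) a : ℚ)) ∈ M u := by
      intro mm a
      have h1 : ((e (K + mm) a₀ : ℚ)) < ((e (K + 1 + mm) a : ℚ)) :=
        he (K + mm) (K + 1 + mm) (by omega) a₀ a
      have h2 : ((e (K + 1 + mm) a : ℚ)) < ((e (K + 2 + mm) a₀ : ℚ)) :=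
        he (K + 1 + mm) (K + 2 + mm) (by omega) a a₀
      obtain ⟨kk, hkk⟩ := mem_iUnion.mp (e (K + 1 + mm) a).2
      have hA : ((e (K + mm) a₀ : ℚ)) ∈ M u := by
        have := hmm (K + mm); rwa [hconst (K + mm) (by omega)] at this
      have hB : ((e (K + 2 + mm) a₀ : ℚ)) ∈ M u := by
        have := hmm (K + 2 + mm); rwa [hconst (K + 2 + mm) (by omega)] at this
      have : kk = u := HAux.sandwich_rev hlt hA hB hkk h1.le h2.le
      rwa [this] at hkk
    set F : ℕ → ↥(M u) → ↥(M u) := fun mm a =>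
      ⟨(e (K + 1 + mm) ⟨(a : ℚ), mem_iUnion.mpr ⟨u, a.2⟩⟩ : ℚ), hmap mm _⟩ with hF
    have hFsm : ∀ mm, StrictMono (F mm) := by
      intro mm a b hab
      exact Subtype.mk_lt_mk.mpr ((e (K + 1 + mm)).strictMono (Subtype.mk_lt_mk.mpr hab))
    refine ih u ⟨fun mm => OrderEmbedding.ofStrictMono (F mm) (hFsm mm), ?_⟩
    intro k l hkl a b
    exact he (K + 1 + k) (K + 1 + l) (by omega) _ _

/-- Transfer: a set whose order is in ℋ has no stacked chain of self-copies. -/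
theorem SetInH.not_stackedSelf {γ : Type*} [LinearOrder γ] {A : Set γ}
    (h : SetInH A) : ¬ StackedSelf A := by
  obtain ⟨M, hM, ⟨φ⟩⟩ := h
  intro hA
  exact hM.not_stackedSelf (hA.of_orderIso φ)

end HAux3
section HAux4

open Set

/-- The order-isomorphism onto the image of an order embedding. -/
theorem HAux.isoImage {α β : Type*} [LinearOrder α] [LinearOrder β]
    (f : α ↪o β) (A : Set α) : Nonempty (↥A ≃o ↥((fun a => f a) '' A)) := by
  refine ⟨StrictMono.orderIsoOfSurjective
    (fun a => ⟨f a, ⟨(a : α), a.2, rfl⟩⟩) ?_ ?_⟩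
  · intro a b hab
    exact Subtype.mk_lt_mk.mpr (f.strictMono (Subtype.mk_lt_mk.mpr hab))
  · rintro ⟨b, a, ha, rfl⟩
    exact ⟨⟨a, ha⟩, rfl⟩

theorem HAux.isoSubset {α : Type*} [LinearOrder α] {B S : Set α} (h : B ⊆ S) :
    Nonempty (↥B ≃o ↥{a : ↥S | (a : α) ∈ B}) := by
  refine ⟨StrictMono.orderIsoOfSurjective
    (fun b => ⟨⟨(b : α), h b.2⟩, b.2⟩) ?_ ?_⟩
  · intro a b hab
    exact Subtype.mk_lt_mk.mpr (Subtype.mk_lt_mk.mpr hab)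
  · rintro ⟨⟨a, haS⟩, haB⟩
    exact ⟨⟨a, haB⟩, rfl⟩

theorem HAux.embCongr {α β α' β' : Type*} [LinearOrder α] [LinearOrder β]
    [LinearOrder α'] [LinearOrder β']
    (hα : Nonempty (α ≃o α')) (hβ : Nonempty (β ≃o β'))
    (h : Nonempty (α ↪o β)) : Nonempty (α' ↪o β') :=
  ⟨(hα.some.symm.toOrderEmbedding.trans h.some).trans hβ.some.toOrderEmbedding⟩

theorem SetInH.congr {γ δ : Type*} [LinearOrder γ] [LinearOrder δ]
    {A : Set γ} {B : Set δ} (h : SetInH A) (hiso : Nonempty (↥A ≃o ↥B)) : SetInH B := by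
  obtain ⟨M, hM, ⟨φ⟩⟩ := h
  exact ⟨M, hM, ⟨hiso.some.symm.trans φ⟩⟩

/-- An ω-sum of an ℋ-sequence with (*) is itself in ℋ. -/
theorem IsOmegaSumH.setInH {γ : Type*} [LinearOrder γ] [Countable γ]
    {S : Set γ} {Li : ℕ → Set γ} (h : IsOmegaSumH S Li) : SetInH S := by
  classical
  obtain ⟨ι⟩ := Order.embedding_from_countable_to_dense ↥S ℚ
  have hsub : ∀ t, Li t ⊆ S := fun t => h.union ▸ subset_iUnion Li t
  set AA : ℕ → Set ↥S := fun t => {a | (a : γ) ∈ Li t} with hAA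
  set MM : ℕ → Set ℚ := fun t => (fun a => ι a) '' AA t with hMM
  have isoLt : ∀ t, Nonempty (↥(Li t) ≃o ↥(MM t)) := fun t =>
    ⟨(HAux.isoSubset (hsub t)).some.trans (HAux.isoImage ι (AA t)).some⟩
  have hMne : ∀ t, (MM t).Nonempty := by
    intro t
    obtain ⟨y, hy⟩ := h.nonemp t
    exact ⟨ι ⟨y, hsub t hy⟩, ⟨⟨y, hsub t hy⟩, hy, rfl⟩⟩
  have hMH : ∀ t, InH (MM t) := by
    intro t
    obtain ⟨W, hW, ⟨ψ⟩⟩ := h.inH t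
    exact InH.iso hW ⟨ψ.symm.trans (isoLt t).some⟩
  have hMstar : ∀ t, {j | Nonempty (↥(MM t) ↪o ↥(MM j))}.Infinite := by
    intro t
    refine (h.star t).mono ?_
    intro j hj
    exact HAux.embCongr (isoLt t) (isoLt j) hj
  have hMlt : ∀ i j, i < j → ∀ x ∈ MM i, ∀ y ∈ MM j, x < y := by
    rintro i j hij _ ⟨a, ha, rfl⟩ _ ⟨b, hb, rfl⟩
    exact ι.strictMono (Subtype.mk_lt_mk.mpr (h.mono i j hij _ ha _ hb))
  have hInH : InH (⋃ t, MM t) := InH.omegaSum MM hMne hMH hMstar hMlt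
  have hUeq : (⋃ t, MM t) = (fun a => ι a) '' (univ : Set ↥S) := by
    ext b
    simp only [mem_iUnion, hMM, mem_image, mem_univ, true_and]
    constructor
    · rintro ⟨t, a, _, rfl⟩; exact ⟨a, rfl⟩
    · rintro ⟨a, rfl⟩
      have : (a : γ) ∈ ⋃ t, Li t := h.union.symm ▸ a.2
      obtain ⟨t, ht⟩ := mem_iUnion.mp this
      exact ⟨t, a, ht, rfl⟩
  refine ⟨⋃ t, MM t, hInH, ⟨?_⟩⟩
  have i1 : ↥S ≃o ↥((fun a => ι a) '' (univ : Set ↥S)) :=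
    (OrderIso.Set.univ).symm.trans (HAux.isoImage ι univ).some
  exact i1.trans (OrderIso.setCongr _ _ hUeq.symm)

/-- Members of ℋ are additively indecomposable. -/
theorem InH.indec {N : Set ℚ} (h : InH N) :
    ∀ {β : Type*} [LinearOrder β] (D E : Set β) (f : ↥N ↪o β),
      (∀ d ∈ D, ∀ e' ∈ E, d < e') → (∀ a, f a ∈ D ∪ E) →
      Nonempty (↥N ↪o ↥D) ∨ Nonempty (↥N ↪o ↥E) := by
  induction h with
  | singleton q =>
    intro β _ D E f hDE hrange
    have a : ↥({q} : Set ℚ) := ⟨q, mem_singleton q⟩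
    have habs : ∀ (x y : ↥({q} : Set ℚ)), x < y → False := by
      intro x y hxy
      have hx : (x : ℚ) = q := x.2
      have hy : (y : ℚ) = q := y.2
      have h' : (x : ℚ) < (y : ℚ) := hxy
      rw [hx, hy] at h'
      exact absurd h' (lt_irrefl q)
    rcases hrange a with hD | hE
    · refine Or.inl ⟨OrderEmbedding.ofStrictMono (fun _ => ⟨f a, hD⟩) ?_⟩
      intro x y hxy
      exact (habs x y hxy).elim
    · refine Or.inr ⟨OrderEmbedding.ofStrictMono (fun _ => ⟨f a, hE⟩) ?_⟩
      intro x y hxy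
      exact (habs x y hxy).elim
  | iso hA hiso ih =>
    intro β _ D E f hDE hrange
    have φ := hiso.some
    rcases ih D E (φ.toOrderEmbedding.trans f) hDE (fun a => hrange (φ a)) with hg | hg
    · obtain ⟨g⟩ := hg
      exact Or.inl ⟨φ.symm.toOrderEmbedding.trans g⟩
    · obtain ⟨g⟩ := hg
      exact Or.inr ⟨φ.symm.toOrderEmbedding.trans g⟩
  | omegaSum M hne hH hstar hlt ih =>
    intro β _ D E f hDE hrange
    by_cases hD : ∀ a, f a ∈ D
    · exact Or.inl ⟨OrderEmbedding.ofStrictMono (fun a => ⟨f a, hD a⟩)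
        (fun a b hab => Subtype.mk_lt_mk.mpr (f.strictMono hab))⟩
    · push_neg at hD
      obtain ⟨a₀, ha₀⟩ := hD
      have hE0 : f a₀ ∈ E := (hrange a₀).resolve_left ha₀
      obtain ⟨k, hk⟩ := mem_iUnion.mp a₀.2
      obtain ⟨r, hr⟩ := HAux.rind hlt hstar k
      have hmemE : ∀ x, f (r x) ∈ E := by
        intro x
        obtain ⟨i, hik, hmem⟩ := hr x
        have hlt1 : (a₀ : ℚ) < ((r x) : ℚ) := hlt k i hik _ hk _ hmem
        have hflt : f a₀ < f (r x) := f.strictMono (Subtype.mk_lt_mk.mpr hlt1)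
        rcases hrange (r x) with hD' | hE'
        · exact absurd (hDE _ hD' _ hE0) (asymm hflt)
        · exact hE'
      exact Or.inr ⟨OrderEmbedding.ofStrictMono (fun x => ⟨f (r x), hmemE x⟩)
        (fun a b hab => Subtype.mk_lt_mk.mpr (f.strictMono (r.strictMono hab)))⟩
  | omegaStarSum M hne hH hstar hlt ih =>
    intro β _ D E f hDE hrange
    by_cases hE : ∀ a, f a ∈ E
    · exact Or.inr ⟨OrderEmbedding.ofStrictMono (fun a => ⟨f a, hE a⟩)
        (fun a b hab => Subtype.mk_lt_mk.mpr (f.strictMono hab))⟩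
    · push_neg at hE
      obtain ⟨a₀, ha₀⟩ := hE
      have hD0 : f a₀ ∈ D := by
        rcases hrange a₀ with hD' | hE'
        · exact hD'
        · exact absurd hE' ha₀
      obtain ⟨k, hk⟩ := mem_iUnion.mp a₀.2
      obtain ⟨r, hr⟩ := HAux.lind hlt hstar k
      have hmemD : ∀ x, f (r x) ∈ D := by
        intro x
        obtain ⟨i, hik, hmem⟩ := hr x
        have hlt1 : ((r x) : ℚ) < (a₀ : ℚ) := hlt k i hik _ hk _ hmem
        have hflt : f (r x) < f a₀ := f.strictMono (Subtype.mk_lt_mk.mpr hlt1)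
        rcases hrange (r x) with hD' | hE'
        · exact hD'
        · exact absurd (hDE _ hD0 _ hE') (asymm hflt)
      exact Or.inl ⟨OrderEmbedding.ofStrictMono (fun x => ⟨f (r x), hmemD x⟩)
        (fun a b hab => Subtype.mk_lt_mk.mpr (f.strictMono (r.strictMono hab)))⟩

/-- Members of ℋ embedded into a finite union of consecutive convex blocks
embed into a single block. -/
theorem InH.indec_finite {N : Set ℚ} (h : InH N) {β : Type*} [LinearOrder β]
    (B : ℕ → Set β) (hB : ∀ i j, i < j → ∀ x ∈ B i, ∀ y ∈ B j, x < y) :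
    ∀ (K : ℕ) (f : ↥N ↪o β), (∀ a, ∃ t, t ≤ K ∧ f a ∈ B t) →
      ∃ t, t ≤ K ∧ Nonempty (↥N ↪o ↥(B t)) := by
  intro K
  induction K with
  | zero =>
    intro f hf
    have hmem : ∀ a, f a ∈ B 0 := by
      intro a
      obtain ⟨t, ht0, hmem⟩ := hf a
      rwa [Nat.le_zero.mp ht0] at hmem
    exact ⟨0, le_rfl, ⟨OrderEmbedding.ofStrictMono (fun a => ⟨f a, hmem a⟩)
      (fun a b hab => Subtype.mk_lt_mk.mpr (f.strictMono hab))⟩⟩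
  | succ K ihK =>
    intro f hf
    set D : Set β := {b | ∃ t, t ≤ K ∧ b ∈ B t} with hD
    have hDE : ∀ d ∈ D, ∀ e' ∈ B (K + 1), d < e' := by
      rintro d ⟨t, htK, hd⟩ e' he'
      exact hB t (K + 1) (by omega) d hd e' he'
    have hrange : ∀ a, f a ∈ D ∪ B (K + 1) := by
      intro a
      obtain ⟨t, htK1, hmem⟩ := hf a
      rcases Nat.lt_succ_iff_lt_or_eq.mp (Nat.lt_succ_of_le htK1) with h' | rfl
      · exact Or.inl ⟨t, by omega, hmem⟩
      · exact Or.inr hmem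
    rcases h.indec D (B (K + 1)) f hDE hrange with hg | hg
    · obtain ⟨g⟩ := hg
      obtain ⟨t, htK, hemb⟩ := ihK (g.trans (OrderEmbedding.subtype _)) (fun a => (g a).2)
      exact ⟨t, by omega, hemb⟩
    · exact ⟨K + 1, le_rfl, hg⟩

end HAux4
section HAux5

open Set

/-- If `Pa` (in ℋ) embeds into one part of the ω-sum `Pb`, then `Pa + Pb` is in ℋ. -/
theorem HAux.typeInH_of_embed {L : Type*} [LinearOrder L] [Countable L]
    {Pa Pb : Set L} {Mi : ℕ → Set L} (hMi : IsOmegaSumH Pb Mi)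
    (hPane : Pa.Nonempty) (hPa : SetInH Pa) {m : ℕ}
    (hemb : Nonempty (↥Pa ↪o ↥(Mi m))) :
    TypeInH (↥Pa ⊕ₗ ↥Pb) := by
  classical
  haveI : Countable (↥Pa ⊕ₗ ↥Pb) := inferInstanceAs (Countable (↥Pa ⊕ ↥Pb))
  obtain ⟨ι⟩ := Order.embedding_from_countable_to_dense (↥Pa ⊕ₗ ↥Pb) ℚ
  have hsub : ∀ t, Mi t ⊆ Pb := fun t => hMi.union ▸ subset_iUnion Mi t
  set AA : ℕ → Set (↥Pa ⊕ₗ ↥Pb) := fun t =>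
    Nat.rec {p | ∃ a : ↥Pa, p = toLex (Sum.inl a)}
      (fun t' _ => {p | ∃ b : ↥Pb, (b : L) ∈ Mi t' ∧ p = toLex (Sum.inr b)}) t with hAAdef
  set MM : ℕ → Set ℚ := fun t => (fun p => ι p) '' AA t with hMMdef
  -- isomorphisms with the summands
  have iso0 : Nonempty (↥Pa ≃o ↥(AA 0)) := by
    refine ⟨StrictMono.orderIsoOfSurjective (fun a => ⟨toLex (Sum.inl a), ⟨a, rfl⟩⟩) ?_ ?_⟩
    · intro a b hab
      exact Subtype.mk_lt_mk.mpr (Sum.Lex.inl_lt_inl_iff.mpr hab)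
    · rintro ⟨p, a, rfl⟩
      exact ⟨a, rfl⟩
  have isot : ∀ t, Nonempty (↥(Mi t) ≃o ↥(AA (t + 1))) := by
    intro t
    refine ⟨StrictMono.orderIsoOfSurjective
      (fun mb => ⟨toLex (Sum.inr ⟨(mb : L), hsub t mb.2⟩), ⟨⟨(mb : L), hsub t mb.2⟩, mb.2, rfl⟩⟩)
      ?_ ?_⟩
    · intro a b hab
      exact Subtype.mk_lt_mk.mpr (Sum.Lex.inr_lt_inr_iff.mpr (Subtype.mk_lt_mk.mpr hab))
    · rintro ⟨p, b, hbM, rfl⟩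
      exact ⟨⟨(b : L), hbM⟩, rfl⟩
  have isoMM : ∀ t, Nonempty (↥(AA t) ≃o ↥(MM t)) := fun t => HAux.isoImage ι (AA t)
  have iso0' : Nonempty (↥Pa ≃o ↥(MM 0)) := ⟨iso0.some.trans (isoMM 0).some⟩
  have isot' : ∀ t, Nonempty (↥(Mi t) ≃o ↥(MM (t + 1))) :=
    fun t => ⟨(isot t).some.trans (isoMM (t + 1)).some⟩
  -- constructor hypotheses
  have hMne : ∀ t, (MM t).Nonempty := by
    intro t
    cases t with
    | zero =>
      obtain ⟨a, ha⟩ := hPane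
      exact ⟨ι (toLex (Sum.inl ⟨a, ha⟩)), ⟨toLex (Sum.inl ⟨a, ha⟩), ⟨⟨a, ha⟩, rfl⟩, rfl⟩⟩
    | succ t' =>
      obtain ⟨y, hy⟩ := hMi.nonemp t'
      exact ⟨ι (toLex (Sum.inr ⟨y, hsub t' hy⟩)),
        ⟨toLex (Sum.inr ⟨y, hsub t' hy⟩), ⟨⟨y, hsub t' hy⟩, hy, rfl⟩, rfl⟩⟩
  have hMH : ∀ t, InH (MM t) := by
    intro t
    cases t with
    | zero =>
      obtain ⟨W, hW, ⟨φ⟩⟩ := hPa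
      exact InH.iso hW ⟨φ.symm.trans iso0'.some⟩
    | succ t' =>
      obtain ⟨W, hW, ⟨φ⟩⟩ := hMi.inH t'
      exact InH.iso hW ⟨φ.symm.trans (isot' t').some⟩
  have hMstar : ∀ t, {j | Nonempty (↥(MM t) ↪o ↥(MM j))}.Infinite := by
    intro t
    have hinj : Function.Injective (fun j : ℕ => j + 1) := fun a b h => by simpa using h
    cases t with
    | zero =>
      refine (((hMi.star m).image (hinj.injOn)).mono ?_)
      rintro _ ⟨j, hj, rfl⟩
      refine HAux.embCongr iso0' (isot' j) ?_
      exact ⟨hemb.some.trans hj.some⟩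
    | succ t' =>
      refine (((hMi.star t').image (hinj.injOn)).mono ?_)
      rintro _ ⟨j, hj, rfl⟩
      exact HAux.embCongr (isot' t') (isot' j) hj
  have hMlt : ∀ s t, s < t → ∀ x ∈ MM s, ∀ y ∈ MM t, x < y := by
    intro s t hst
    rintro _ ⟨p, hp, rfl⟩ _ ⟨p', hp', rfl⟩
    have hplt : p < p' := by
      cases s with
      | zero =>
        obtain ⟨a, rfl⟩ := hp
        obtain ⟨t', rfl⟩ : ∃ t', t = t' + 1 := ⟨t - 1, by omega⟩
        obtain ⟨b, hbM, rfl⟩ := hp'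
        exact Sum.Lex.inl_lt_inr a b
      | succ s' =>
        obtain ⟨b, hbM, rfl⟩ := hp
        obtain ⟨t', rfl⟩ : ∃ t', t = t' + 1 := ⟨t - 1, by omega⟩
        obtain ⟨b', hbM', rfl⟩ := hp'
        refine Sum.Lex.inr_lt_inr_iff.mpr (Subtype.mk_lt_mk.mpr ?_)
        exact hMi.mono s' t' (by omega) _ hbM _ hbM'
    exact ι.strictMono hplt
  have hInH : InH (⋃ t, MM t) := InH.omegaSum MM hMne hMH hMstar hMlt
  have hUeq : (⋃ t, MM t) = (fun p => ι p) '' (univ : Set (↥Pa ⊕ₗ ↥Pb)) := by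
    ext q
    simp only [mem_iUnion, hMMdef, mem_image, mem_univ, true_and]
    constructor
    · rintro ⟨t, p, _, rfl⟩
      exact ⟨p, rfl⟩
    · rintro ⟨p, rfl⟩
      rcases hp : ofLex p with a | b
      · refine ⟨0, p, ⟨a, ?_⟩, rfl⟩
        rw [← hp]; rfl
      · have : (b : L) ∈ ⋃ t, Mi t := hMi.union.symm ▸ b.2
        obtain ⟨t, ht⟩ := mem_iUnion.mp this
        refine ⟨t + 1, p, ⟨b, ht, ?_⟩, rfl⟩
        rw [← hp]; rfl
  refine ⟨⋃ t, MM t, hInH, ⟨?_⟩⟩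
  have i1 : (↥Pa ⊕ₗ ↥Pb) ≃o ↥((fun p => ι p) '' (univ : Set (↥Pa ⊕ₗ ↥Pb))) :=
    (OrderIso.Set.univ).symm.trans (HAux.isoImage ι univ).some
  exact i1.trans (OrderIso.setCongr _ _ hUeq.symm)

end HAux5
/-- finite sums of ω-sums: every self-embedding respects the
summands, and the copies of `L` are exactly the unions of copies of the
summands. -/
theorem stmt14 {L : Type*} [LinearOrder L] [Countable L] (n : ℕ) (P : ℕ → Set L)
    (hcover : (⋃ i ≤ n, P i) = univ)
    (hdisj : ∀ i ≤ n, ∀ j ≤ n, i ≠ j → Disjoint (P i) (P j))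
    (hlt : ∀ i ≤ n, ∀ j ≤ n, i < j → ∀ x ∈ P i, ∀ y ∈ P j, x < y)
    (hsum : ∀ i ≤ n, ∃ Li : ℕ → Set L, IsOmegaSumH (P i) Li)
    (hnH : ∀ i < n, ¬ TypeInH (↥(P i) ⊕ₗ ↥(P (i + 1)))) :
    (∀ f : L ↪o L, ∀ i ≤ n, f '' P i ⊆ P i) ∧
    (∀ A : Set L, A ∈ Copies L ↔
      ∃ C : ℕ → Set L, (∀ i ≤ n, C i ⊆ P i ∧ Nonempty (↥(C i) ≃o ↥(P i))) ∧
        A = ⋃ i ≤ n, C i) := by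
  classical
  have hPne : ∀ i, i ≤ n → (P i).Nonempty := by
    intro i hi
    obtain ⟨Li, hLi⟩ := hsum i hi
    obtain ⟨y, hy⟩ := hLi.nonemp 0
    exact ⟨y, hLi.union ▸ mem_iUnion.mpr ⟨0, hy⟩⟩
  have hcov : ∀ x : L, ∃ i, i ≤ n ∧ x ∈ P i := by
    intro x
    have hx : x ∈ ⋃ i ≤ n, P i := hcover.symm ▸ mem_univ x
    simpa using hx
  have hordle : ∀ {i j : ℕ} {x y : L}, i ≤ n → j ≤ n → x ∈ P i → y ∈ P j → x ≤ y → i ≤ j := by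
    intro i j x y hi hj hx hy hxy
    by_contra h
    push_neg at h
    exact absurd hxy (not_le.mpr (hlt j hj i hi h y hy x hx))
  -- Part (a)
  have key : ∀ (f : L ↪o L) (i : ℕ), i ≤ n → ∀ x ∈ P i, f x ∈ P i := by
    intro f
    -- Claim 1: no drops
    have claim1 : ∀ i, i ≤ n → ∀ x ∈ P i, ∀ j, j ≤ n → f x ∈ P j → i ≤ j := by
      by_contra hbad
      push_neg at hbad
      obtain ⟨i0, hi0n, x0, hx0, j0, hj0n, hfx0, hj0i0⟩ := hbad
      set Bad := {i | i ≤ n ∧ ∃ x ∈ P i, ∃ j, j ≤ n ∧ f x ∈ P j ∧ j < i} with hBad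
      have hBadne : Bad.Nonempty := ⟨i0, hi0n, x0, hx0, j0, hj0n, hfx0, hj0i0⟩
      obtain ⟨hin, x, hx, j, hjn, hfx, hji⟩ := Nat.sInf_mem hBadne
      have hnodrop : ∀ k, k < sInf Bad → ∀ w ∈ P k, ∀ j', j' ≤ n → f w ∈ P j' → k ≤ j' := by
        intro k hk w hw j' hj'n hfw
        by_contra h
        push_neg at h
        have hkn : k ≤ n := by omega
        exact Nat.notMem_of_lt_sInf hk ⟨hkn, w, hw, j', hj'n, hfw, h⟩
      obtain ⟨i', hieq⟩ : ∃ i', sInf Bad = i' + 1 :=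
        ⟨sInf Bad - 1, by omega⟩
      have hi'n : i' ≤ n := by omega
      have hji' : j = i' := by
        by_contra hne'
        have hjlt : j < i' := by omega
        obtain ⟨w, hw⟩ := hPne i' hi'n
        have hwx : w < x := by
          have := hlt i' hi'n (sInf Bad) hin (by omega) w hw x (by exact hx)
          exact this
        have hfwx : f w < f x := f.strictMono hwx
        obtain ⟨j', hj'n, hfw⟩ := hcov (f w)
        have hj'j : j' ≤ j := hordle hj'n hjn hfw hfx hfwx.le
        have := hnodrop i' (by omega) w hw j' hj'n hfw
        omega
      subst hji'
      have hfPi' : ∀ w ∈ P j, f w ∈ P j ∧ f w < f x := by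
        intro w hw
        have hwx : w < x := hlt j hjn (sInf Bad) hin (by omega) w hw x hx
        have hfwx : f w < f x := f.strictMono hwx
        obtain ⟨j', hj'n, hfw⟩ := hcov (f w)
        have h1 : j' ≤ j := hordle hj'n hjn hfw hfx hfwx.le
        have h2 : j ≤ j' := hnodrop j (by omega) w hw j' hj'n hfw
        have : j' = j := by omega
        subst this
        exact ⟨hfw, hfwx⟩
      obtain ⟨Li, hLi⟩ := hsum j hjn
      have hSeq : (⋃ t, Li t) = P j := hLi.union
      have hmm' : ∀ y : L, y ∈ P j → y ∈ ⋃ t, Li t := fun y hy => hSeq.symm ▸ hy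
      have hmemS : ∀ w : ↥(⋃ t, Li t), f (w : L) ∈ ⋃ t, Li t := by
        intro w
        exact hmm' _ (hfPi' (w : L) (hSeq ▸ w.2)).1
      have hsm : StrictMono (fun w : ↥(⋃ t, Li t) => (⟨f (w : L), hmemS w⟩ : ↥(⋃ t, Li t))) := by
        intro a b hab
        exact Subtype.mk_lt_mk.mpr (f.strictMono (Subtype.mk_lt_mk.mpr hab))
      set E := OrderEmbedding.ofStrictMono _ hsm with hE
      have hzS : f x ∈ ⋃ t, Li t := by rw [hSeq]; exact hfx
      have hb : ∀ w, ((E w : ↥(⋃ t, Li t)) : L) < ((⟨f x, hzS⟩ : ↥(⋃ t, Li t)) : L) := by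
        intro w
        exact (hfPi' (w : L) (hSeq ▸ w.2)).2
      obtain ⟨u, hstacked⟩ := HAux.block hLi.nonemp hLi.mono hLi.star E ⟨f x, hzS⟩ hb
      exact (hLi.inH u).not_stackedSelf hstacked
    -- Claim 2: no climbs
    have claim2 : ∀ i, i ≤ n → ∀ x ∈ P i, ∀ j, j ≤ n → f x ∈ P j → j ≤ i := by
      by_contra hbad
      push_neg at hbad
      obtain ⟨i0, hi0n, x0, hx0, j0, hj0n, hfx0, hij0⟩ := hbad
      set Bad := {i | i ≤ n ∧ ∃ x ∈ P i, ∃ j, j ≤ n ∧ f x ∈ P j ∧ i < j} with hBad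
      have hBadne : Bad.Nonempty := ⟨i0, hi0n, x0, hx0, j0, hj0n, hfx0, hij0⟩
      have hbddA : BddAbove Bad := ⟨n, fun k hk => hk.1⟩
      obtain ⟨hin, x, hx, j, hjn, hfx, hij⟩ := Nat.sSup_mem hBadne hbddA
      set i := sSup Bad with hidef
      have hnotup : ∀ k, i < k → k ∉ Bad := by
        intro k hk hkB
        exact absurd (le_csSup hbddA hkB) (not_le.mpr hk)
      have hi1n : i + 1 ≤ n := by omega
      have hfP1 : ∀ w ∈ P (i + 1), f w ∈ P (i + 1) := by
        intro w hw
        obtain ⟨j', hj'n, hfw⟩ := hcov (f w)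
        have h1 : i + 1 ≤ j' := claim1 (i + 1) hi1n w hw j' hj'n hfw
        rcases eq_or_lt_of_le h1 with heq | hlt'
        · rwa [← heq] at hfw
        · exact absurd ⟨hi1n, w, hw, j', hj'n, hfw, hlt'⟩ (hnotup (i + 1) (by omega))
      obtain ⟨w₀, hw₀⟩ := hPne (i + 1) hi1n
      have hfw₀ : f w₀ ∈ P (i + 1) := hfP1 w₀ hw₀
      have hxw₀ : x < w₀ := hlt i hin (i + 1) hi1n (by omega) x hx w₀ hw₀
      have hji1 : j = i + 1 := by
        have h1 : j ≤ i + 1 := hordle hjn hi1n hfx hfw₀ (f.strictMono hxw₀).le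
        omega
      subst hji1
      have hG : ∀ y, y ∈ P i → x ≤ y → f y ∈ P (i + 1) := by
        intro y hy hxy
        obtain ⟨j', hj'n, hfy⟩ := hcov (f y)
        have h1 : i + 1 ≤ j' := hordle hjn hj'n hfx hfy (f.le_iff_le.mpr hxy)
        have hyw₀ : y < w₀ := hlt i hin (i + 1) hi1n (by omega) y hy w₀ hw₀
        have h2 : j' ≤ i + 1 := hordle hj'n hi1n hfy hfw₀ (f.strictMono hyw₀).le
        have : j' = i + 1 := by omega
        rwa [← this]
      obtain ⟨Mi, hMi⟩ := hsum (i + 1) hi1n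
      obtain ⟨Lip, hLip⟩ := hsum i hin
      have hxS : x ∈ ⋃ t, Lip t := hLip.union.symm ▸ hx
      obtain ⟨k, hk⟩ := mem_iUnion.mp hxS
      obtain ⟨r, hr⟩ := HAux.rind hLip.mono hLip.star k
      have hfw₀M : f w₀ ∈ ⋃ t, Mi t := hMi.union.symm ▸ hfw₀
      obtain ⟨σ, hσ⟩ := mem_iUnion.mp hfw₀M
      have hcomp : ∀ w : ↥(⋃ t, Lip t), ∃ t, t ≤ σ ∧ f ((r w : ↥(⋃ t, Lip t)) : L) ∈ Mi t := by
        intro w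
        obtain ⟨it, hit, hmem⟩ := hr w
        have hxlt : x < ((r w : ↥(⋃ t, Lip t)) : L) := hLip.mono k it hit x hk _ hmem
        have hrP : ((r w : ↥(⋃ t, Lip t)) : L) ∈ P i := hLip.union ▸ mem_iUnion.mpr ⟨it, hmem⟩
        have hfy : f _ ∈ P (i + 1) := hG _ hrP hxlt.le
        have hfyM : f ((r w : ↥(⋃ t, Lip t)) : L) ∈ ⋃ t, Mi t := hMi.union.symm ▸ hfy
        obtain ⟨t, ht⟩ := mem_iUnion.mp hfyM
        have hrw₀ : ((r w : ↥(⋃ t, Lip t)) : L) < w₀ :=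
          hlt i hin (i + 1) hi1n (by omega) _ hrP w₀ hw₀
        have hb : t ≤ σ := HAux.idx_le_of_le hMi.mono ht hσ (f.strictMono hrw₀).le
        exact ⟨t, hb, ht⟩
      have hSi : SetInH (P i) := hLip.setInH
      obtain ⟨W, hW, ⟨φ⟩⟩ := hSi
      have hPiU : Nonempty (↥(P i) ≃o ↥(⋃ t, Lip t)) := ⟨OrderIso.setCongr _ _ hLip.union.symm⟩
      set ψf : ↥W → L := fun a => f ((r (hPiU.some (φ.symm a)) : ↥(⋃ t, Lip t)) : L) with hψf
      have hψsm : StrictMono ψf := by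
        intro a b hab
        exact f.strictMono (r.strictMono ((hPiU.some).strictMono ((φ.symm).strictMono hab)))
      have hψrange : ∀ a, ∃ t, t ≤ σ ∧ ψf a ∈ Mi t := fun a => hcomp _
      obtain ⟨mm, hmσ, ⟨g⟩⟩ :=
        hW.indec_finite Mi hMi.mono σ (OrderEmbedding.ofStrictMono ψf hψsm) hψrange
      have hPiMim : Nonempty (↥(P i) ↪o ↥(Mi mm)) := ⟨φ.toOrderEmbedding.trans g⟩
      exact hnH i (by omega)
        (HAux.typeInH_of_embed hMi (hPne i hin) (⟨W, hW, ⟨φ⟩⟩ : SetInH (P i)) hPiMim)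
    intro i hi x hx
    obtain ⟨j, hjn, hfx⟩ := hcov (f x)
    have h1 := claim1 i hi x hx j hjn hfx
    have h2 := claim2 i hi x hx j hjn hfx
    have : j = i := by omega
    rwa [← this]
  refine ⟨?_, ?_⟩
  · rintro f i hi _ ⟨x, hx, rfl⟩
    exact key f i hi x hx
  -- Part (b)
  intro A
  constructor
  · rintro ⟨g⟩
    set F : L → L := fun l => ((g.symm l : ↥A) : L) with hF
    have hFsm : StrictMono F := by
      intro a b hab
      exact Subtype.mk_lt_mk.mp (g.symm.strictMono hab)
    set f := OrderEmbedding.ofStrictMono F hFsm with hf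
    refine ⟨fun i => F '' P i, ?_, ?_⟩
    · intro i hi
      constructor
      · rintro _ ⟨x, hx, rfl⟩
        exact key f i hi x hx
      · exact ⟨((HAux.isoImage f (P i)).some).symm⟩
    · have hrange : range F = A := by
        ext y
        constructor
        · rintro ⟨l, rfl⟩
          exact (g.symm l).2
        · intro hy
          exact ⟨g ⟨y, hy⟩, by simp [hF]⟩
      calc A = range F := hrange.symm
      _ = F '' univ := image_univ.symm
      _ = F '' (⋃ i, ⋃ (_ : i ≤ n), P i) := by rw [hcover]
      _ = ⋃ i, ⋃ (_ : i ≤ n), F '' P i := by rw [image_iUnion₂]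
  · rintro ⟨C, hC, rfl⟩
    have hCsub : ∀ i, i ≤ n → C i ⊆ P i := fun i hi => (hC i hi).1
    have hCiso : ∀ i, i ≤ n → Nonempty (↥(C i) ≃o ↥(P i)) := fun i hi => (hC i hi).2
    have hCuniq : ∀ {i j : ℕ} {x : L}, i ≤ n → j ≤ n → x ∈ C i → x ∈ C j → i = j := by
      intro i j x hi hj hxi hxj
      by_contra hne
      exact (hdisj i hi j hj hne).ne_of_mem (hCsub i hi hxi) (hCsub j hj hxj) rfl
    have hsel : ∀ x : ↥(⋃ i ≤ n, C i), ∃ i, i ≤ n ∧ (x : L) ∈ C i := by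
      intro x
      obtain ⟨i, hi, hxi⟩ := mem_iUnion₂.mp x.2
      exact ⟨i, hi, hxi⟩
    choose idx hidxn hidx using hsel
    set G : ↥(⋃ i ≤ n, C i) → L := fun x => ((hCiso (idx x) (hidxn x)).some ⟨(x : L), hidx x⟩ : ↥(P (idx x)))
    have hGmem : ∀ x, G x ∈ P (idx x) := fun x =>
      ((hCiso (idx x) (hidxn x)).some ⟨(x : L), hidx x⟩).2
    have hdep : ∀ {i j : ℕ} (hi : i ≤ n) (hj : j ≤ n) (hij : i = j)
        (a : ↥(C i)) (b : ↥(C j)), (a : L) < (b : L) →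
        (((hCiso i hi).some a : ↥(P i)) : L) < (((hCiso j hj).some b : ↥(P j)) : L) := by
      intro i j hi hj hij
      subst hij
      intro a b hab
      exact Subtype.mk_lt_mk.mp ((hCiso i hi).some.strictMono (Subtype.mk_lt_mk.mpr hab))
    have hdeq : ∀ {i j : ℕ} (hi : i ≤ n) (hj : j ≤ n) (hij : i = j)
        (a : ↥(C i)) (b : ↥(C j)), (a : L) = (b : L) →
        (((hCiso i hi).some a : ↥(P i)) : L) = (((hCiso j hj).some b : ↥(P j)) : L) := by
      intro i j hi hj hij
      subst hij
      intro a b hab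
      have : a = b := Subtype.ext hab
      rw [this]
    have hGsm : StrictMono G := by
      intro x y hxy
      have hxy' : (x : L) < (y : L) := hxy
      have hle : idx x ≤ idx y := by
        by_contra h
        push_neg at h
        exact absurd hxy' (not_lt.mpr
          (hlt (idx y) (hidxn y) (idx x) (hidxn x) h _ (hCsub _ (hidxn y) (hidx y)) _
            (hCsub _ (hidxn x) (hidx x))).le)
      rcases eq_or_lt_of_le hle with heq | hlt'
      · exact hdep (hidxn x) (hidxn y) heq _ _ hxy'
      · exact hlt (idx x) (hidxn x) (idx y) (hidxn y) hlt' _ (hGmem x) _ (hGmem y)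
    have hGsurj : Function.Surjective G := by
      intro l
      obtain ⟨i, hi, hl⟩ := hcov l
      set pre := ((hCiso i hi).some).symm ⟨l, hl⟩ with hpre
      have hpreC : (pre : L) ∈ C i := pre.2
      have hpreA : (pre : L) ∈ ⋃ i ≤ n, C i := mem_iUnion₂.mpr ⟨i, hi, hpreC⟩
      refine ⟨⟨(pre : L), hpreA⟩, ?_⟩
      have hieq : idx ⟨(pre : L), hpreA⟩ = i := hCuniq (hidxn _) hi (hidx _) hpreC
      have h1 : (((hCiso (idx ⟨(pre : L), hpreA⟩) (hidxn _)).some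
          ⟨(pre : L), hidx _⟩ : ↥(P _)) : L)
          = (((hCiso i hi).some pre : ↥(P i)) : L) :=
        hdeq (hidxn _) hi hieq _ _ rfl
      have h2 : (((hCiso i hi).some pre : ↥(P i)) : L) = l := by
        rw [hpre]
        simp
      exact h1.trans h2
    exact ⟨StrictMono.orderIsoOfSurjective G hGsm hGsurj⟩
end

section
/- Let n∈ω and let L be a countable linear order partitioned into consecutive convex parts L_0, L_1, …, L_n (every element of L_i precedes every element of L_j whenever i<j), where for each i ≤ n the induced order on L_i is the ω-sum of a sequence of members of ℋ satisfying condition (*), and for each i < n the lexicographic sum L_i + L_{i+1} is not order-isomorphic to any member of ℋ. Then ⟨ℙ(L),≤*⟩ is σ-closed: for every sequence ⟨A_n : n∈ω⟩ in ℙ(L) with A_{n+1} ≤* A_n for all n∈ω, there exists A ∈ ℙ(L) with A ≤* A_n for all n∈ω. -/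
set_option linter.unusedSectionVars false
open Set


namespace S15
variable {α : Type*} {β : Type*} {γ : Type*} [LinearOrder α] [LinearOrder β] [LinearOrder γ]

/-- inclusion as order embedding between set-subtypes -/
def inclEmb {A B : Set α} (h : A ⊆ B) : ↥A ↪o ↥B :=
  OrderEmbedding.ofStrictMono (fun x => ⟨x.1, h x.2⟩) (fun x y hxy => by
    simpa [Subtype.mk_lt_mk] using hxy)

@[simp] lemma inclEmb_apply {A B : Set α} (h : A ⊆ B) (x : ↥A) :
    (inclEmb h x : α) = x.1 := rfl

/-- the canonical embedding of a set-subtype into the ambient order -/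
def setVal (B : Set α) : ↥B ↪o α := OrderEmbedding.subtype _

@[simp] lemma setVal_apply {B : Set α} (x : ↥B) : setVal B x = x.1 := rfl

/-- image of a subset `S` (of `A`) under an order embedding `↥A ↪o β`. -/
def img {A : Set α} (f : ↥A ↪o β) (S : Set α) : Set β :=
  {b | ∃ a : ↥A, a.1 ∈ S ∧ f a = b}

lemma img_lt {A : Set α} (f : ↥A ↪o β) {S S' : Set α}
    (h : ∀ a ∈ S, ∀ a' ∈ S', a < a') :
    ∀ b ∈ img f S, ∀ b' ∈ img f S', b < b' := by
  rintro b ⟨a, haS, rfl⟩ b' ⟨a', ha'S, rfl⟩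
  exact f.strictMono (Subtype.coe_lt_coe.mp (h _ haS _ ha'S))

lemma img_mono {A : Set α} (f : ↥A ↪o β) {S S' : Set α} (h : S ⊆ S') :
    img f S ⊆ img f S' := by
  rintro b ⟨a, haS, rfl⟩; exact ⟨a, h haS, rfl⟩

lemma img_iUnion {A : Set α} (f : ↥A ↪o β) {ι : Sort*} (T : ι → Set α) :
    img f (⋃ i, T i) = ⋃ i, img f (T i) := by
  ext b
  constructor
  · rintro ⟨a, haS, rfl⟩
    obtain ⟨i, hi⟩ := mem_iUnion.mp haS
    exact mem_iUnion.mpr ⟨i, a, hi, rfl⟩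
  · intro hb
    obtain ⟨i, a, hi, rfl⟩ := mem_iUnion.mp hb
    exact ⟨a, mem_iUnion.mpr ⟨i, hi⟩, rfl⟩

lemma img_sub {A : Set α} {B : Set β} (g : ↥A ↪o ↥B) (S : Set α) :
    img (g.trans (setVal B)) S ⊆ B := by
  rintro b ⟨a, haS, rfl⟩; exact (g a).2

/-- the image is order-isomorphic to the original subset -/
noncomputable def imgIso {A S : Set α} (f : ↥A ↪o β) (hS : S ⊆ A) :
    ↥S ≃o ↥(img f S) := by
  refine StrictMono.orderIsoOfSurjective
    (fun x => ⟨f ⟨x.1, hS x.2⟩, ⟨⟨x.1, hS x.2⟩, x.2, rfl⟩⟩) ?_ ?_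
  · intro x y hxy
    exact Subtype.mk_lt_mk.mpr (f.strictMono (Subtype.mk_lt_mk.mpr (Subtype.coe_lt_coe.mpr hxy)))
  · rintro ⟨b, a, haS, rfl⟩
    exact ⟨⟨a.1, haS⟩, Subtype.ext (by simp only [])⟩

/-- an order embedding is an isomorphism onto (the subtype of) its range -/
noncomputable def rangeIso (f : α ↪o β) : α ≃o ↥(Set.range f) := by
  refine StrictMono.orderIsoOfSurjective (fun a => ⟨f a, mem_range_self a⟩) ?_ ?_
  · intro x y hxy; exact Subtype.mk_lt_mk.mpr (f.strictMono hxy)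
  · rintro ⟨b, a, rfl⟩; exact ⟨a, rfl⟩

lemma family_mem_unique {ι : Type*} [LinearOrder ι] {X : ι → Set α}
    (hX : ∀ i j, i < j → ∀ x ∈ X i, ∀ y ∈ X j, x < y)
    {x : α} {i j : ι} (hi : x ∈ X i) (hj : x ∈ X j) : i = j := by
  rcases lt_trichotomy i j with h | h | h
  · exact absurd (hX i j h x hi x hj) (lt_irrefl x)
  · exact h
  · exact absurd (hX j i h x hj x hi) (lt_irrefl x)

section Glue
variable {ι ι' : Type*} [LinearOrder ι] [LinearOrder ι']

/-- index selector within a union -/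
noncomputable def pickIdx {X : ι → Set α} (x : ↥(⋃ i, X i)) : ι :=
  (mem_iUnion.mp x.2).choose

lemma pickIdx_mem {X : ι → Set α} (x : ↥(⋃ i, X i)) : x.1 ∈ X (pickIdx x) :=
  (mem_iUnion.mp x.2).choose_spec

/-- glueing embeddings along increasing families -/
noncomputable def glueEmb (X : ι → Set α) (Y : ι' → Set β) (σ : ι → ι') (hσ : StrictMono σ)
    (hX : ∀ i j, i < j → ∀ x ∈ X i, ∀ y ∈ X j, x < y)
    (hY : ∀ i j, i < j → ∀ x ∈ Y i, ∀ y ∈ Y j, x < y)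
    (e : ∀ i, ↥(X i) ↪o ↥(Y (σ i))) : ↥(⋃ i, X i) ↪o ↥(⋃ i', Y i') := by
  have key : ∀ (i j : ι) (h : i = j) (z : α) (hz : z ∈ X i),
      ((e i ⟨z, hz⟩ : ↥(Y (σ i))) : β) = ((e j ⟨z, h ▸ hz⟩ : ↥(Y (σ j))) : β) := by
    rintro i _ rfl z hz; rfl
  refine OrderEmbedding.ofStrictMono
    (fun x => ⟨(e (pickIdx x) ⟨x.1, pickIdx_mem x⟩).1,
       mem_iUnion.mpr ⟨σ (pickIdx x), (e (pickIdx x) ⟨x.1, pickIdx_mem x⟩).2⟩⟩) ?_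
  intro x y hxy
  have hxy' : x.1 < y.1 := Subtype.coe_lt_coe.mpr hxy
  have hxi : x.1 ∈ X (pickIdx x) := pickIdx_mem x
  have hyj : y.1 ∈ X (pickIdx y) := pickIdx_mem y
  refine Subtype.mk_lt_mk.mpr ?_
  rcases lt_trichotomy (pickIdx x) (pickIdx y) with h | h | h
  · exact hY _ _ (hσ h) _ (e _ ⟨x.1, hxi⟩).2 _ (e _ ⟨y.1, hyj⟩).2
  · rw [key _ _ h x.1 hxi]
    exact (e (pickIdx y)).strictMono (Subtype.mk_lt_mk.mpr hxy')
  · exact absurd (hX _ _ h y.1 hyj x.1 hxi) (not_lt.mpr hxy'.le)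

/-- glueing embeddings along decreasing families -/
noncomputable def glueEmbD (X : ι → Set α) (Y : ι' → Set β) (σ : ι → ι') (hσ : StrictMono σ)
    (hX : ∀ i j, i < j → ∀ x ∈ X i, ∀ y ∈ X j, y < x)
    (hY : ∀ i j, i < j → ∀ x ∈ Y i, ∀ y ∈ Y j, y < x)
    (e : ∀ i, ↥(X i) ↪o ↥(Y (σ i))) : ↥(⋃ i, X i) ↪o ↥(⋃ i', Y i') := by
  have key : ∀ (i j : ι) (h : i = j) (z : α) (hz : z ∈ X i),
      ((e i ⟨z, hz⟩ : ↥(Y (σ i))) : β) = ((e j ⟨z, h ▸ hz⟩ : ↥(Y (σ j))) : β) := by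
    rintro i _ rfl z hz; rfl
  refine OrderEmbedding.ofStrictMono
    (fun x => ⟨(e (pickIdx x) ⟨x.1, pickIdx_mem x⟩).1,
       mem_iUnion.mpr ⟨σ (pickIdx x), (e (pickIdx x) ⟨x.1, pickIdx_mem x⟩).2⟩⟩) ?_
  intro x y hxy
  have hxy' : x.1 < y.1 := Subtype.coe_lt_coe.mpr hxy
  have hxi : x.1 ∈ X (pickIdx x) := pickIdx_mem x
  have hyj : y.1 ∈ X (pickIdx y) := pickIdx_mem y
  refine Subtype.mk_lt_mk.mpr ?_
  rcases lt_trichotomy (pickIdx x) (pickIdx y) with h | h | h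
  · exact absurd (hX _ _ h x.1 hxi y.1 hyj) (not_lt.mpr hxy'.le)
  · rw [key _ _ h x.1 hxi]
    exact (e (pickIdx y)).strictMono (Subtype.mk_lt_mk.mpr hxy')
  · exact hY _ _ (hσ h) _ (e _ ⟨y.1, hyj⟩).2 _ (e _ ⟨x.1, hxi⟩).2

/-- glueing isomorphisms along increasing families -/
noncomputable def glueIso (X : ι → Set α) (Y : ι → Set β)
    (hX : ∀ i j, i < j → ∀ x ∈ X i, ∀ y ∈ X j, x < y)
    (hY : ∀ i j, i < j → ∀ x ∈ Y i, ∀ y ∈ Y j, x < y)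
    (e : ∀ i, ↥(X i) ≃o ↥(Y i)) : ↥(⋃ i, X i) ≃o ↥(⋃ i, Y i) := by
  have key : ∀ (i j : ι) (h : i = j) (z : α) (hz : z ∈ X i),
      ((e i ⟨z, hz⟩ : ↥(Y i)) : β) = ((e j ⟨z, h ▸ hz⟩ : ↥(Y j)) : β) := by
    rintro i _ rfl z hz; rfl
  refine StrictMono.orderIsoOfSurjective
    (fun x => ⟨(e (pickIdx x) ⟨x.1, pickIdx_mem x⟩).1,
       mem_iUnion.mpr ⟨pickIdx x, (e (pickIdx x) ⟨x.1, pickIdx_mem x⟩).2⟩⟩) ?_ ?_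
  · intro x y hxy
    have hxy' : x.1 < y.1 := Subtype.coe_lt_coe.mpr hxy
    have hxi : x.1 ∈ X (pickIdx x) := pickIdx_mem x
    have hyj : y.1 ∈ X (pickIdx y) := pickIdx_mem y
    refine Subtype.mk_lt_mk.mpr ?_
    rcases lt_trichotomy (pickIdx x) (pickIdx y) with h | h | h
    · exact hY _ _ h _ (e _ ⟨x.1, hxi⟩).2 _ (e _ ⟨y.1, hyj⟩).2
    · rw [key _ _ h x.1 hxi]
      exact ((e (pickIdx y)).toOrderEmbedding).strictMono (Subtype.mk_lt_mk.mpr hxy')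
    · exact absurd (hX _ _ h y.1 hyj x.1 hxi) (not_lt.mpr hxy'.le)
  · rintro ⟨b, hb⟩
    obtain ⟨i, hbi⟩ := mem_iUnion.mp hb
    set a : ↥(X i) := (e i).symm ⟨b, hbi⟩ with ha
    refine ⟨⟨a.1, mem_iUnion.mpr ⟨i, a.2⟩⟩, ?_⟩
    apply Subtype.ext
    show ((e _ ⟨a.1, _⟩ : ↥(Y _)) : β) = b
    have hidx : pickIdx (⟨a.1, mem_iUnion.mpr ⟨i, a.2⟩⟩ : ↥(⋃ i, X i)) = i :=
      family_mem_unique hX (pickIdx_mem _) a.2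
    rw [key _ _ hidx a.1 (pickIdx_mem _)]
    have step : ∀ (p : a.1 ∈ X i), ((e i ⟨a.1, p⟩ : ↥(Y i)) : β) = b := by
      intro p
      have h2 : (⟨a.1, p⟩ : ↥(X i)) = a := Subtype.ext rfl
      rw [h2, ha]; simp
    exact step _

end Glue

/-! ### selectors and ω-sum tools -/

lemma exists_strictMono_sel (s : ℕ → Set ℕ) (hs : ∀ t, (s t).Infinite) (m : ℕ) :
    ∃ τ : ℕ → ℕ, StrictMono τ ∧ (∀ t, m ≤ τ t) ∧ ∀ t, τ t ∈ s t := by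
  choose F hmem hgt using fun t (a : ℕ) => (hs t).exists_gt a
  let τ : ℕ → ℕ := fun t => Nat.rec (F 0 m) (fun t ih => F (t + 1) ih) t
  have hτ0 : τ 0 = F 0 m := rfl
  have hτs : ∀ t, τ (t + 1) = F (t + 1) (τ t) := fun t => rfl
  have hmono : StrictMono τ := by
    apply strictMono_nat_of_lt_succ
    intro t; rw [hτs]; exact hgt (t + 1) (τ t)
  have hm : ∀ t, m ≤ τ t := by
    intro t
    have h0 : m < τ 0 := hgt 0 m
    cases t with
    | zero => exact h0.le
    | succ t => exact (h0.trans_le (hmono.monotone (Nat.zero_le (t + 1)))).le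
  refine ⟨τ, hmono, hm, fun t => ?_⟩
  cases t with
  | zero => exact hmem 0 m
  | succ t => rw [hτs]; exact hmem (t + 1) (τ t)

lemma no_strictAnti (f : ℕ → ℕ) (h : ∀ t, f (t + 1) < f t) : False := by
  have key : ∀ t, f t + t ≤ f 0 := by
    intro t
    induction t with
    | zero => simp
    | succ t ih =>
      have := h t
      omega
  have := key (f 0 + 1)
  omega

section OmegaTools
variable (M : ℕ → Set α)

/-- the tail of an ω-indexed family -/
def tailS (m : ℕ) : Set α := ⋃ j, M (m + j)

lemma subset_tailS {m j : ℕ} (h : m ≤ j) : M j ⊆ tailS M m := by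
  intro x hx
  exact mem_iUnion.mpr ⟨j - m, by rwa [Nat.add_sub_cancel' h]⟩

lemma tailS_subset (m : ℕ) : tailS M m ⊆ ⋃ j, M j := by
  intro x hx
  obtain ⟨j, hj⟩ := mem_iUnion.mp hx
  exact mem_iUnion.mpr ⟨m + j, hj⟩

lemma tailS_mono {m m' : ℕ} (h : m ≤ m') : tailS M m' ⊆ tailS M m := by
  intro x hx
  obtain ⟨j, hj⟩ := mem_iUnion.mp hx
  exact subset_tailS M (by omega) hj

lemma tailS_anti_mem {m : ℕ} {x : α} (hx : x ∈ tailS M m) : ∃ j, m ≤ j ∧ x ∈ M j := by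
  obtain ⟨j, hj⟩ := mem_iUnion.mp hx
  exact ⟨m + j, by omega, hj⟩

variable {M}

/-- an ω-sum with (*) embeds into each of its tails -/
lemma tail_emb (hlt : ∀ i j, i < j → ∀ x ∈ M i, ∀ y ∈ M j, x < y)
    (hstar : ∀ i, {j | Nonempty (↥(M i) ↪o ↥(M j))}.Infinite) (m : ℕ) :
    Nonempty (↥(⋃ j, M j) ↪o ↥(tailS M m)) := by
  obtain ⟨τ, hτmono, hτge, hτmem⟩ :=
    exists_strictMono_sel (fun t => {j | Nonempty (↥(M t) ↪o ↥(M j))}) hstar m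
  have hσ : StrictMono (fun t => τ t - m) := by
    intro a b hab
    have := hτmono hab
    have := hτge a
    simp only
    omega
  have e : ∀ t, ↥(M t) ↪o ↥(M (m + (τ t - m))) := by
    intro t
    have h1 : m + (τ t - m) = τ t := Nat.add_sub_cancel' (hτge t)
    have h2 : M (τ t) = M (m + (τ t - m)) := by rw [h1]
    exact (hτmem t).some.trans (OrderIso.setCongr _ _ h2).toOrderEmbedding
  exact ⟨glueEmb M (fun j => M (m + j)) (fun t => τ t - m) hσ hlt
    (fun i j hij => hlt (m + i) (m + j) (by omega)) e⟩

/-- mirror version: an ω*-sum with (*) embeds into each of its tails (initial parts) -/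
lemma tail_embD (hlt : ∀ i j, i < j → ∀ x ∈ M i, ∀ y ∈ M j, y < x)
    (hstar : ∀ i, {j | Nonempty (↥(M i) ↪o ↥(M j))}.Infinite) (m : ℕ) :
    Nonempty (↥(⋃ j, M j) ↪o ↥(tailS M m)) := by
  obtain ⟨τ, hτmono, hτge, hτmem⟩ :=
    exists_strictMono_sel (fun t => {j | Nonempty (↥(M t) ↪o ↥(M j))}) hstar m
  have hσ : StrictMono (fun t => τ t - m) := by
    intro a b hab
    have := hτmono hab
    have := hτge a
    simp only
    omega
  have e : ∀ t, ↥(M t) ↪o ↥(M (m + (τ t - m))) := by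
    intro t
    have h1 : m + (τ t - m) = τ t := Nat.add_sub_cancel' (hτge t)
    have h2 : M (τ t) = M (m + (τ t - m)) := by rw [h1]
    exact (hτmem t).some.trans (OrderIso.setCongr _ _ h2).toOrderEmbedding
  exact ⟨glueEmbD M (fun j => M (m + j)) (fun t => τ t - m) hσ hlt
    (fun i j hij => hlt (m + i) (m + j) (by omega)) e⟩

/-- an ω-sum with (*) embeds above any of its points -/
lemma emb_above (hlt : ∀ i j, i < j → ∀ x ∈ M i, ∀ y ∈ M j, x < y)
    (hstar : ∀ i, {j | Nonempty (↥(M i) ↪o ↥(M j))}.Infinite)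
    {x : α} (hx : x ∈ ⋃ j, M j) :
    Nonempty (↥(⋃ j, M j) ↪o ↥({y | y ∈ (⋃ j, M j) ∧ x ≤ y})) := by
  obtain ⟨j0, hj0⟩ := mem_iUnion.mp hx
  obtain ⟨E⟩ := tail_emb hlt hstar (j0 + 1)
  have hsub : tailS M (j0 + 1) ⊆ {y | y ∈ (⋃ j, M j) ∧ x ≤ y} := by
    intro y hy
    obtain ⟨j, hj, hyj⟩ := tailS_anti_mem M hy
    exact ⟨tailS_subset M _ hy, (hlt j0 j (by omega) x hj0 y hyj).le⟩
  exact ⟨E.trans (inclEmb hsub)⟩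

/-- an ω*-sum with (*) embeds below any of its points -/
lemma emb_below (hlt : ∀ i j, i < j → ∀ x ∈ M i, ∀ y ∈ M j, y < x)
    (hstar : ∀ i, {j | Nonempty (↥(M i) ↪o ↥(M j))}.Infinite)
    {x : α} (hx : x ∈ ⋃ j, M j) :
    Nonempty (↥(⋃ j, M j) ↪o ↥({y | y ∈ (⋃ j, M j) ∧ y ≤ x})) := by
  obtain ⟨j0, hj0⟩ := mem_iUnion.mp hx
  obtain ⟨E⟩ := tail_embD hlt hstar (j0 + 1)
  have hsub : tailS M (j0 + 1) ⊆ {y | y ∈ (⋃ j, M j) ∧ y ≤ x} := by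
    intro y hy
    obtain ⟨j, hj, hyj⟩ := tailS_anti_mem M hy
    exact ⟨tailS_subset M _ hy, (hlt j0 j (by omega) x hj0 y hyj).le⟩
  exact ⟨E.trans (inclEmb hsub)⟩

end OmegaTools

/-! ### splitting lemmas -/

lemma split_right {H : Set α}
    (hri : ∀ x ∈ H, Nonempty (↥H ↪o ↥({y | y ∈ H ∧ x ≤ y})))
    (N : ℕ → Set β) (hNlt : ∀ i j, i < j → ∀ x ∈ N i, ∀ y ∈ N j, x < y) :
    ∀ m, Nonempty (↥H ↪o ↥(⋃ (r : ℕ) (_ : r ≤ m), N r)) →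
      ∃ r, r ≤ m ∧ Nonempty (↥H ↪o ↥(N r)) := by
  intro m
  induction m with
  | zero =>
    rintro ⟨e⟩
    refine ⟨0, le_refl 0, ⟨e.trans (OrderIso.setCongr _ _ ?_).toOrderEmbedding⟩⟩
    ext z; simp
  | succ m ih =>
    rintro ⟨e⟩
    by_cases hc : ∃ x : ↥H, ((e x : ↥(⋃ (r : ℕ) (_ : r ≤ m + 1), N r)) : β) ∈ N (m + 1)
    · obtain ⟨x0, hx0⟩ := hc
      obtain ⟨r⟩ := hri x0.1 x0.2
      have hmem : ∀ y : ↥({z | z ∈ H ∧ x0.1 ≤ z}),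
          ((e ⟨y.1, y.2.1⟩ : ↥(⋃ (r : ℕ) (_ : r ≤ m + 1), N r)) : β) ∈ N (m + 1) := by
        intro y
        obtain ⟨s, hsm, hbs⟩ := mem_iUnion₂.mp (e ⟨y.1, y.2.1⟩).2
        have hle : e x0 ≤ e ⟨y.1, y.2.1⟩ := e.monotone (Subtype.coe_le_coe.mp (by exact y.2.2))
        rcases Nat.lt_or_ge s (m + 1) with hs | hs
        · exact absurd (Subtype.coe_le_coe.mpr hle)
            (not_le.mpr (hNlt s (m + 1) hs _ hbs _ hx0))
        · have hs1 : s = m + 1 := by omega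
          subst hs1; exact hbs
      refine ⟨m + 1, le_refl _, ⟨r.trans (OrderEmbedding.ofStrictMono
        (fun y => ⟨(e ⟨y.1, y.2.1⟩ : ↥(⋃ (r : ℕ) (_ : r ≤ m + 1), N r)).1, hmem y⟩) ?_)⟩⟩
      intro u v huv
      exact Subtype.mk_lt_mk.mpr (Subtype.coe_lt_coe.mpr
        (e.strictMono (Subtype.mk_lt_mk.mpr (Subtype.coe_lt_coe.mpr huv))))
    · push_neg at hc
      have hmem : ∀ x : ↥H,
          ((e x : ↥(⋃ (r : ℕ) (_ : r ≤ m + 1), N r)) : β) ∈ ⋃ (r : ℕ) (_ : r ≤ m), N r := by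
        intro x
        obtain ⟨s, hsm, hbs⟩ := mem_iUnion₂.mp (e x).2
        have : s ≠ m + 1 := fun hsm1 => hc x (hsm1 ▸ hbs)
        exact mem_iUnion₂.mpr ⟨s, by omega, hbs⟩
      obtain ⟨r, hr, he⟩ := ih ⟨OrderEmbedding.ofStrictMono (fun x => ⟨_, hmem x⟩)
        (fun u v huv => Subtype.mk_lt_mk.mpr (Subtype.coe_lt_coe.mpr (e.strictMono huv)))⟩
      exact ⟨r, by omega, he⟩

lemma split_left {H : Set α}
    (hli : ∀ x ∈ H, Nonempty (↥H ↪o ↥({y | y ∈ H ∧ y ≤ x})))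
    (N : ℕ → Set β) (hNlt : ∀ i j, i < j → ∀ x ∈ N i, ∀ y ∈ N j, y < x) :
    ∀ m, Nonempty (↥H ↪o ↥(⋃ (r : ℕ) (_ : r ≤ m), N r)) →
      ∃ r, r ≤ m ∧ Nonempty (↥H ↪o ↥(N r)) := by
  intro m
  induction m with
  | zero =>
    rintro ⟨e⟩
    refine ⟨0, le_refl 0, ⟨e.trans (OrderIso.setCongr _ _ ?_).toOrderEmbedding⟩⟩
    ext z; simp
  | succ m ih =>
    rintro ⟨e⟩
    by_cases hc : ∃ x : ↥H, ((e x : ↥(⋃ (r : ℕ) (_ : r ≤ m + 1), N r)) : β) ∈ N (m + 1)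
    · obtain ⟨x0, hx0⟩ := hc
      obtain ⟨r⟩ := hli x0.1 x0.2
      have hmem : ∀ y : ↥({z | z ∈ H ∧ z ≤ x0.1}),
          ((e ⟨y.1, y.2.1⟩ : ↥(⋃ (r : ℕ) (_ : r ≤ m + 1), N r)) : β) ∈ N (m + 1) := by
        intro y
        obtain ⟨s, hsm, hbs⟩ := mem_iUnion₂.mp (e ⟨y.1, y.2.1⟩).2
        have hle : e ⟨y.1, y.2.1⟩ ≤ e x0 := e.monotone (Subtype.coe_le_coe.mp (by exact y.2.2))
        rcases Nat.lt_or_ge s (m + 1) with hs | hs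
        · exact absurd (Subtype.coe_le_coe.mpr hle)
            (not_le.mpr (hNlt s (m + 1) hs _ hbs _ hx0))
        · have hs1 : s = m + 1 := by omega
          subst hs1; exact hbs
      refine ⟨m + 1, le_refl _, ⟨r.trans (OrderEmbedding.ofStrictMono
        (fun y => ⟨(e ⟨y.1, y.2.1⟩ : ↥(⋃ (r : ℕ) (_ : r ≤ m + 1), N r)).1, hmem y⟩) ?_)⟩⟩
      intro u v huv
      exact Subtype.mk_lt_mk.mpr (Subtype.coe_lt_coe.mpr
        (e.strictMono (Subtype.mk_lt_mk.mpr (Subtype.coe_lt_coe.mpr huv))))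
    · push_neg at hc
      have hmem : ∀ x : ↥H,
          ((e x : ↥(⋃ (r : ℕ) (_ : r ≤ m + 1), N r)) : β) ∈ ⋃ (r : ℕ) (_ : r ≤ m), N r := by
        intro x
        obtain ⟨s, hsm, hbs⟩ := mem_iUnion₂.mp (e x).2
        have : s ≠ m + 1 := fun hsm1 => hc x (hsm1 ▸ hbs)
        exact mem_iUnion₂.mpr ⟨s, by omega, hbs⟩
      obtain ⟨r, hr, he⟩ := ih ⟨OrderEmbedding.ofStrictMono (fun x => ⟨_, hmem x⟩)
        (fun u v huv => Subtype.mk_lt_mk.mpr (Subtype.coe_lt_coe.mpr (e.strictMono huv)))⟩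
      exact ⟨r, by omega, he⟩

/-! ### the no-absorption lemma for ℋ -/

/-- increasing family -/
def IncF (V : ℕ → Set ℚ) : Prop := ∀ i j, i < j → ∀ x ∈ V i, ∀ y ∈ V j, x < y
/-- decreasing family -/
def DecF (V : ℕ → Set ℚ) : Prop := ∀ i j, i < j → ∀ x ∈ V i, ∀ y ∈ V j, y < x

/-- `M` does not absorb an `ω`-chain (or `ω*`-chain) of copies of itself -/
def NoAbsP (M : Set ℚ) : Prop :=
  (∀ V : ℕ → Set ℚ, IncF V → (∀ t, Nonempty (↥M ↪o ↥(V t))) →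
      ¬ Nonempty (↥(⋃ t, V t) ↪o ↥M)) ∧
  (∀ V : ℕ → Set ℚ, DecF V → (∀ t, Nonempty (↥M ↪o ↥(V t))) →
      ¬ Nonempty (↥(⋃ t, V t) ↪o ↥M))

lemma finish_inc (N : ℕ → Set ℚ)
    (hlt : ∀ i j, i < j → ∀ x ∈ N i, ∀ y ∈ N j, x < y)
    (hstar : ∀ r, {j | Nonempty (↥(N r) ↪o ↥(N j))}.Infinite)
    (r0 : ℕ) (θ : Nonempty (↥(⋃ r, N r) ↪o ↥(N r0)))
    (ih : NoAbsP (N r0)) : False := by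
  obtain ⟨τ, hτmono, -, hτmem⟩ :=
    exists_strictMono_sel (fun _ => {j | Nonempty (↥(N r0) ↪o ↥(N j))}) (fun _ => hstar r0) 0
  set F : ↥(⋃ r, N r) ↪o ℚ := θ.some.trans (setVal (N r0)) with hF
  refine ih.1 (fun t => img F (N (τ t))) ?_ ?_ ?_
  · intro i j hij
    exact img_lt F (fun a ha a' ha' => hlt (τ i) (τ j) (hτmono hij) a ha a' ha')
  · intro t
    exact ⟨(hτmem t).some.trans (imgIso F (subset_iUnion N (τ t))).toOrderEmbedding⟩
  · refine ⟨inclEmb ?_⟩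
    refine iUnion_subset fun t => ?_
    exact (img_sub θ.some (N (τ t)))

lemma finish_dec (N : ℕ → Set ℚ)
    (hlt : ∀ i j, i < j → ∀ x ∈ N i, ∀ y ∈ N j, y < x)
    (hstar : ∀ r, {j | Nonempty (↥(N r) ↪o ↥(N j))}.Infinite)
    (r0 : ℕ) (θ : Nonempty (↥(⋃ r, N r) ↪o ↥(N r0)))
    (ih : NoAbsP (N r0)) : False := by
  obtain ⟨τ, hτmono, -, hτmem⟩ :=
    exists_strictMono_sel (fun _ => {j | Nonempty (↥(N r0) ↪o ↥(N j))}) (fun _ => hstar r0) 0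
  set F : ↥(⋃ r, N r) ↪o ℚ := θ.some.trans (setVal (N r0)) with hF
  refine ih.2 (fun t => img F (N (τ t))) ?_ ?_ ?_
  · intro i j hij x hx y hy
    exact img_lt F (fun a ha a' ha' => hlt (τ i) (τ j) (hτmono hij) a' ha' a ha) y hy x hx
  · intro t
    exact ⟨(hτmem t).some.trans (imgIso F (subset_iUnion N (τ t))).toOrderEmbedding⟩
  · refine ⟨inclEmb ?_⟩
    refine iUnion_subset fun t => ?_
    exact (img_sub θ.some (N (τ t)))

lemma noAbs {M : Set ℚ} (h : InH M) : NoAbsP M := by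
  induction h with
  | singleton q =>
    constructor
    all_goals {
      intro V hV hVemb ⟨Φ⟩
      have hq : q ∈ ({q} : Set ℚ) := rfl
      have x0 := (hVemb 0).some ⟨q, hq⟩
      have x1 := (hVemb 1).some ⟨q, hq⟩
      have h01 : (inclEmb (subset_iUnion V 0) x0 : ↥(⋃ t, V t)) ≠
          (inclEmb (subset_iUnion V 1) x1 : ↥(⋃ t, V t)) := by
        intro hEq
        have : (x0 : ℚ) = (x1 : ℚ) := congrArg Subtype.val hEq
        first
        | exact absurd this (ne_of_lt (hV 0 1 one_pos _ x0.2 _ x1.2))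
        | exact absurd this (ne_of_gt (hV 0 1 one_pos _ x0.2 _ x1.2))
      apply h01
      apply Φ.injective
      apply Subtype.ext
      have e0 : (Φ (inclEmb (subset_iUnion V 0) x0) : ℚ) = q :=
        (Φ (inclEmb (subset_iUnion V 0) x0)).2
      have e1 : (Φ (inclEmb (subset_iUnion V 1) x1) : ℚ) = q :=
        (Φ (inclEmb (subset_iUnion V 1) x1)).2
      rw [e0, e1]
    }
  | @iso A B hA hAB ih =>
    obtain ⟨φ⟩ := hAB
    constructor
    · intro V hV hVemb ⟨Φ⟩
      exact ih.1 V hV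
        (fun t => ⟨(φ.toOrderEmbedding).trans (hVemb t).some⟩)
        ⟨Φ.trans φ.symm.toOrderEmbedding⟩
    · intro V hV hVemb ⟨Φ⟩
      exact ih.2 V hV
        (fun t => ⟨(φ.toOrderEmbedding).trans (hVemb t).some⟩)
        ⟨Φ.trans φ.symm.toOrderEmbedding⟩
  | omegaSum N hne hH hstar hlt ih =>
    have hri := fun (x : ℚ) (hx : x ∈ ⋃ j, N j) => emb_above hlt hstar hx
    constructor
    · -- increasing chain of copies of the ω-sum
      intro V hV hVemb ⟨Φ⟩
      obtain ⟨w, hw⟩ := hne 0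
      have hwH : w ∈ ⋃ r, N r := mem_iUnion.mpr ⟨0, hw⟩
      set z : ↥(⋃ r, N r) :=
        Φ (inclEmb (subset_iUnion V 1) ((hVemb 1).some ⟨w, hwH⟩)) with hz
      set Θ : ↥(⋃ r, N r) ↪o ↥(⋃ r, N r) :=
        ((hVemb 0).some.trans (inclEmb (subset_iUnion V 0))).trans Φ with hΘ
      have hΘz : ∀ a, Θ a < z := by
        intro a
        apply Φ.strictMono
        apply Subtype.mk_lt_mk.mpr
        exact hV 0 1 one_pos _ ((hVemb 0).some a).2 _ ((hVemb 1).some ⟨w, hwH⟩).2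
      obtain ⟨rs, hrs⟩ := mem_iUnion.mp z.2
      have hbound : ∀ a, (Θ a : ℚ) ∈ ⋃ (r : ℕ) (_ : r ≤ rs), N r := by
        intro a
        obtain ⟨s, hs⟩ := mem_iUnion.mp (Θ a).2
        rcases Nat.lt_or_ge rs s with hcmp | hcmp
        · exact absurd (hlt rs s hcmp _ hrs _ hs) (not_lt.mpr (hΘz a).le)
        · exact mem_iUnion₂.mpr ⟨s, hcmp, hs⟩
      obtain ⟨r0, _, θ⟩ := split_right hri N hlt rs
        ⟨OrderEmbedding.ofStrictMono (fun a => ⟨(Θ a : ℚ), hbound a⟩)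
          (fun u v huv => Subtype.mk_lt_mk.mpr (Subtype.coe_lt_coe.mpr (Θ.strictMono huv)))⟩
      exact finish_inc N hlt hstar r0 θ (ih r0)
    · -- decreasing chain of copies of the ω-sum
      intro V hV hVemb ⟨Φ⟩
      obtain ⟨w, hw⟩ := hne 0
      have hwH : w ∈ ⋃ r, N r := mem_iUnion.mpr ⟨0, hw⟩
      set z : ↥(⋃ r, N r) :=
        Φ (inclEmb (subset_iUnion V 0) ((hVemb 0).some ⟨w, hwH⟩)) with hz
      set Θ : ℕ → (↥(⋃ r, N r) ↪o ↥(⋃ r, N r)) :=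
        fun t => ((hVemb (1 + t)).some.trans (inclEmb (subset_iUnion V (1 + t)))).trans Φ with hΘ
      have hΘz : ∀ t a, Θ t a < z := by
        intro t a
        apply Φ.strictMono
        apply Subtype.mk_lt_mk.mpr
        exact hV 0 (1 + t) (by omega) _ (((hVemb 0).some) ⟨w, hwH⟩).2 _
          (((hVemb (1 + t)).some) a).2
      have hΘpt : ∀ t a b, Θ (t + 1) a < Θ t b := by
        intro t a b
        apply Φ.strictMono
        apply Subtype.mk_lt_mk.mpr
        exact hV (1 + t) (1 + (t + 1)) (by omega) _ (((hVemb (1 + t)).some) b).2 _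
          (((hVemb (1 + (t + 1))).some) a).2
      obtain ⟨rs, hrs⟩ := mem_iUnion.mp z.2
      set Bs : ℕ → Set ℕ := fun t => {r | ∃ a, (Θ t a : ℚ) ∈ N r} with hBs
      have hBsne : ∀ t, (Bs t).Nonempty := by
        intro t
        obtain ⟨s, hs⟩ := mem_iUnion.mp (Θ t ⟨w, hwH⟩).2
        exact ⟨s, ⟨w, hwH⟩, hs⟩
      have hBsbdd : ∀ t, ∀ r ∈ Bs t, r ≤ rs := by
        rintro t r ⟨a, ha⟩
        rcases Nat.lt_or_ge rs r with hcmp | hcmp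
        · exact absurd (hlt rs r hcmp _ hrs _ ha) (not_lt.mpr (hΘz t a).le)
        · exact hcmp
      set μ : ℕ → ℕ := fun t => sSup (Bs t) with hμ
      have hμmem : ∀ t, μ t ∈ Bs t := fun t =>
        Nat.sSup_mem (hBsne t) ⟨rs, fun r hr => hBsbdd t r hr⟩
      have hνmem : ∀ t, sInf (Bs t) ∈ Bs t := fun t => Nat.sInf_mem (hBsne t)
      have hkey : ∀ t, ∀ r ∈ Bs (t + 1), r ≤ sInf (Bs t) := by
        rintro t r ⟨a, ha⟩
        obtain ⟨b, hb⟩ := hνmem t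
        rcases Nat.lt_or_ge (sInf (Bs t)) r with hcmp | hcmp
        · exact absurd (hlt _ _ hcmp _ hb _ ha) (not_lt.mpr (hΘpt t a b).le)
        · exact hcmp
      have hμdec : ∀ t, μ (t + 1) ≤ μ t := by
        intro t
        exact le_trans (csSup_le (hBsne (t + 1)) (fun r hr => hkey t r hr))
          (Nat.sInf_le (hμmem t))
      have hstab : ∃ t, μ (t + 1) = μ t := by
        by_contra hcon
        push_neg at hcon
        exact no_strictAnti μ (fun t => lt_of_le_of_ne (hμdec t) (hcon t))
      obtain ⟨t0, ht0⟩ := hstab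
      have hinfsup : sInf (Bs t0) = μ t0 := by
        have h1 : μ (t0 + 1) ≤ sInf (Bs t0) :=
          csSup_le (hBsne (t0 + 1)) (fun r hr => hkey t0 r hr)
        have h2 : sInf (Bs t0) ≤ μ t0 := Nat.sInf_le (hμmem t0)
        omega
      have hsingle : ∀ a, (Θ t0 a : ℚ) ∈ N (μ t0) := by
        intro a
        obtain ⟨s, hs⟩ := mem_iUnion.mp (Θ t0 a).2
        have hsB : s ∈ Bs t0 := ⟨a, hs⟩
        have hsup : s ≤ μ t0 := le_csSup ⟨rs, fun r hr => hBsbdd t0 r hr⟩ hsB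
        have hinf : sInf (Bs t0) ≤ s := Nat.sInf_le hsB
        have heq : s = μ t0 := by omega
        exact heq ▸ hs
      exact finish_inc N hlt hstar (μ t0)
        ⟨OrderEmbedding.ofStrictMono (fun a => ⟨(Θ t0 a : ℚ), hsingle a⟩)
          (fun u v huv => Subtype.mk_lt_mk.mpr (Subtype.coe_lt_coe.mpr ((Θ t0).strictMono huv)))⟩
        (ih (μ t0))
  | omegaStarSum N hne hH hstar hlt ih =>
    have hli := fun (x : ℚ) (hx : x ∈ ⋃ j, N j) => emb_below hlt hstar hx
    constructor
    · -- increasing chain of copies of the ω*-sum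
      intro V hV hVemb ⟨Φ⟩
      obtain ⟨w, hw⟩ := hne 0
      have hwH : w ∈ ⋃ r, N r := mem_iUnion.mpr ⟨0, hw⟩
      set z : ↥(⋃ r, N r) :=
        Φ (inclEmb (subset_iUnion V 0) ((hVemb 0).some ⟨w, hwH⟩)) with hz
      set Θ : ℕ → (↥(⋃ r, N r) ↪o ↥(⋃ r, N r)) :=
        fun t => ((hVemb (1 + t)).some.trans (inclEmb (subset_iUnion V (1 + t)))).trans Φ with hΘ
      have hΘz : ∀ t a, z < Θ t a := by
        intro t a
        apply Φ.strictMono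
        apply Subtype.mk_lt_mk.mpr
        exact hV 0 (1 + t) (by omega) _ (((hVemb 0).some) ⟨w, hwH⟩).2 _
          (((hVemb (1 + t)).some) a).2
      have hΘpt : ∀ t a b, Θ t b < Θ (t + 1) a := by
        intro t a b
        apply Φ.strictMono
        apply Subtype.mk_lt_mk.mpr
        exact hV (1 + t) (1 + (t + 1)) (by omega) _ (((hVemb (1 + t)).some) b).2 _
          (((hVemb (1 + (t + 1))).some) a).2
      obtain ⟨rs, hrs⟩ := mem_iUnion.mp z.2
      set Bs : ℕ → Set ℕ := fun t => {r | ∃ a, (Θ t a : ℚ) ∈ N r} with hBs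
      have hBsne : ∀ t, (Bs t).Nonempty := by
        intro t
        obtain ⟨s, hs⟩ := mem_iUnion.mp (Θ t ⟨w, hwH⟩).2
        exact ⟨s, ⟨w, hwH⟩, hs⟩
      have hBsbdd : ∀ t, ∀ r ∈ Bs t, r ≤ rs := by
        rintro t r ⟨a, ha⟩
        rcases Nat.lt_or_ge rs r with hcmp | hcmp
        · exact absurd (hlt rs r hcmp _ hrs _ ha) (not_lt.mpr (hΘz t a).le)
        · exact hcmp
      set μ : ℕ → ℕ := fun t => sSup (Bs t) with hμ
      have hμmem : ∀ t, μ t ∈ Bs t := fun t =>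
        Nat.sSup_mem (hBsne t) ⟨rs, fun r hr => hBsbdd t r hr⟩
      have hνmem : ∀ t, sInf (Bs t) ∈ Bs t := fun t => Nat.sInf_mem (hBsne t)
      have hkey : ∀ t, ∀ r ∈ Bs (t + 1), r ≤ sInf (Bs t) := by
        rintro t r ⟨a, ha⟩
        obtain ⟨b, hb⟩ := hνmem t
        rcases Nat.lt_or_ge (sInf (Bs t)) r with hcmp | hcmp
        · exact absurd (hlt _ _ hcmp _ hb _ ha) (not_lt.mpr (hΘpt t a b).le)
        · exact hcmp
      have hμdec : ∀ t, μ (t + 1) ≤ μ t := by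
        intro t
        exact le_trans (csSup_le (hBsne (t + 1)) (fun r hr => hkey t r hr))
          (Nat.sInf_le (hμmem t))
      have hstab : ∃ t, μ (t + 1) = μ t := by
        by_contra hcon
        push_neg at hcon
        exact no_strictAnti μ (fun t => lt_of_le_of_ne (hμdec t) (hcon t))
      obtain ⟨t0, ht0⟩ := hstab
      have hinfsup : sInf (Bs t0) = μ t0 := by
        have h1 : μ (t0 + 1) ≤ sInf (Bs t0) :=
          csSup_le (hBsne (t0 + 1)) (fun r hr => hkey t0 r hr)
        have h2 : sInf (Bs t0) ≤ μ t0 := Nat.sInf_le (hμmem t0)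
        omega
      have hsingle : ∀ a, (Θ t0 a : ℚ) ∈ N (μ t0) := by
        intro a
        obtain ⟨s, hs⟩ := mem_iUnion.mp (Θ t0 a).2
        have hsB : s ∈ Bs t0 := ⟨a, hs⟩
        have hsup : s ≤ μ t0 := le_csSup ⟨rs, fun r hr => hBsbdd t0 r hr⟩ hsB
        have hinf : sInf (Bs t0) ≤ s := Nat.sInf_le hsB
        have heq : s = μ t0 := by omega
        exact heq ▸ hs
      exact finish_dec N hlt hstar (μ t0)
        ⟨OrderEmbedding.ofStrictMono (fun a => ⟨(Θ t0 a : ℚ), hsingle a⟩)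
          (fun u v huv => Subtype.mk_lt_mk.mpr (Subtype.coe_lt_coe.mpr ((Θ t0).strictMono huv)))⟩
        (ih (μ t0))
    · -- decreasing chain of copies of the ω*-sum
      intro V hV hVemb ⟨Φ⟩
      obtain ⟨w, hw⟩ := hne 0
      have hwH : w ∈ ⋃ r, N r := mem_iUnion.mpr ⟨0, hw⟩
      set z : ↥(⋃ r, N r) :=
        Φ (inclEmb (subset_iUnion V 1) ((hVemb 1).some ⟨w, hwH⟩)) with hz
      set Θ : ↥(⋃ r, N r) ↪o ↥(⋃ r, N r) :=
        ((hVemb 0).some.trans (inclEmb (subset_iUnion V 0))).trans Φ with hΘ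
      have hΘz : ∀ a, z < Θ a := by
        intro a
        apply Φ.strictMono
        apply Subtype.mk_lt_mk.mpr
        exact hV 0 1 one_pos _ ((hVemb 0).some a).2 _ ((hVemb 1).some ⟨w, hwH⟩).2
      obtain ⟨rs, hrs⟩ := mem_iUnion.mp z.2
      have hbound : ∀ a, (Θ a : ℚ) ∈ ⋃ (r : ℕ) (_ : r ≤ rs), N r := by
        intro a
        obtain ⟨s, hs⟩ := mem_iUnion.mp (Θ a).2
        rcases Nat.lt_or_ge rs s with hcmp | hcmp
        · exact absurd (hlt rs s hcmp _ hrs _ hs) (not_lt.mpr (hΘz a).le)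
        · exact mem_iUnion₂.mpr ⟨s, hcmp, hs⟩
      obtain ⟨r0, _, θ⟩ := split_left hli N hlt rs
        ⟨OrderEmbedding.ofStrictMono (fun a => ⟨(Θ a : ℚ), hbound a⟩)
          (fun u v huv => Subtype.mk_lt_mk.mpr (Subtype.coe_lt_coe.mpr (Θ.strictMono huv)))⟩
      exact finish_dec N hlt hstar r0 θ (ih r0)

/-! ### the standing structure for Statement 15 -/

variable {L : Type*} [LinearOrder L]

/-- all data of the decomposition of `L` -/
structure Setup (L : Type*) [LinearOrder L] (n : ℕ) where
  P : ℕ → Set L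
  Li : ℕ → ℕ → Set L
  hcover : (⋃ i ≤ n, P i) = univ
  hdisj : ∀ i ≤ n, ∀ j ≤ n, i ≠ j → Disjoint (P i) (P j)
  hPlt : ∀ i ≤ n, ∀ j ≤ n, i < j → ∀ x ∈ P i, ∀ y ∈ P j, x < y
  hsum : ∀ i ≤ n, IsOmegaSumH (P i) (Li i)
  hnH : ∀ i < n, ¬ TypeInH (↥(P i) ⊕ₗ ↥(P (i + 1)))

namespace Setup

variable {n : ℕ} (S : Setup L n)

/-- tail of the `i`-th part -/
def tic (i m : ℕ) : Set L := tailS (S.Li i) m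

lemma union_Li {i : ℕ} (hi : i ≤ n) : (⋃ j, S.Li i j) = S.P i := (S.hsum i hi).union

lemma Li_subset_P {i : ℕ} (hi : i ≤ n) (j : ℕ) : S.Li i j ⊆ S.P i := by
  rw [← S.union_Li hi]; exact subset_iUnion _ j

lemma tic_subset_P {i : ℕ} (hi : i ≤ n) (m : ℕ) : S.tic i m ⊆ S.P i := by
  rw [← S.union_Li hi]; exact tailS_subset _ m

lemma tic_mono {i : ℕ} {m m' : ℕ} (h : m ≤ m') : S.tic i m' ⊆ S.tic i m :=
  tailS_mono _ h

lemma Li_subset_tic {i : ℕ} {m j : ℕ} (h : m ≤ j) : S.Li i j ⊆ S.tic i m :=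
  subset_tailS _ h

lemma tic_nonempty {i : ℕ} (hi : i ≤ n) (m : ℕ) : (S.tic i m).Nonempty := by
  obtain ⟨x, hx⟩ := (S.hsum i hi).nonemp m
  exact ⟨x, S.Li_subset_tic (le_refl m) hx⟩

lemma P_nonempty {i : ℕ} (hi : i ≤ n) : (S.P i).Nonempty := by
  obtain ⟨x, hx⟩ := (S.hsum i hi).nonemp 0
  exact ⟨x, S.Li_subset_P hi 0 hx⟩

lemma exists_part (x : L) : ∃ t, t ≤ n ∧ x ∈ S.P t := by
  have hx : x ∈ (⋃ i ≤ n, S.P i) := by rw [S.hcover]; trivial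
  simpa using hx

/-- index of the part containing `x` -/
noncomputable def pt (x : L) : ℕ :=
  @Nat.find (fun t => t ≤ n ∧ x ∈ S.P t) (Classical.decPred _) (S.exists_part x)

lemma pt_le (x : L) : S.pt x ≤ n :=
  (@Nat.find_spec (fun t => t ≤ n ∧ x ∈ S.P t) (Classical.decPred _) (S.exists_part x)).1

lemma pt_mem (x : L) : x ∈ S.P (S.pt x) :=
  (@Nat.find_spec (fun t => t ≤ n ∧ x ∈ S.P t) (Classical.decPred _) (S.exists_part x)).2

lemma pt_eq {x : L} {t : ℕ} (htn : t ≤ n) (hx : x ∈ S.P t) : S.pt x = t := by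
  by_contra hne
  have hd := S.hdisj (S.pt x) (S.pt_le x) t htn hne
  exact absurd hx (disjoint_left.mp hd (S.pt_mem x))

lemma pt_mono {x y : L} (hxy : x ≤ y) : S.pt x ≤ S.pt y := by
  by_contra hlt
  push_neg at hlt
  have := S.hPlt (S.pt y) (S.pt_le y) (S.pt x) (S.pt_le x) hlt y (S.pt_mem y) x (S.pt_mem x)
  exact absurd hxy (not_le.mpr this)

lemma pt_lt_of_parts {x y : L} {a b : ℕ} (ha : a ≤ n) (hb : b ≤ n) (hab : a < b)
    (hx : x ∈ S.P a) (hy : y ∈ S.P b) : x < y := S.hPlt a ha b hb hab x hx y hy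

/-- block index within part `i` -/
lemma exists_block {i : ℕ} (hi : i ≤ n) {x : L} (hx : x ∈ S.P i) : ∃ j, x ∈ S.Li i j := by
  have : x ∈ ⋃ j, S.Li i j := by rw [S.union_Li hi]; exact hx
  exact mem_iUnion.mp this

/-- part `i` embeds above any of its points -/
lemma P_emb_above {i : ℕ} (hi : i ≤ n) {x : L} (hx : x ∈ S.P i) :
    Nonempty (↥(S.P i) ↪o ↥({y | y ∈ S.P i ∧ x ≤ y})) := by
  have hx' : x ∈ ⋃ j, S.Li i j := by rw [S.union_Li hi]; exact hx
  obtain ⟨E⟩ := emb_above (S.hsum i hi).mono (S.hsum i hi).star hx'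
  have h1 : ↥(S.P i) ≃o ↥(⋃ j, S.Li i j) := OrderIso.setCongr _ _ (S.union_Li hi).symm
  have h2 : ({y | y ∈ (⋃ j, S.Li i j) ∧ x ≤ y} : Set L) = {y | y ∈ S.P i ∧ x ≤ y} := by
    rw [S.union_Li hi]
  exact ⟨(h1.toOrderEmbedding.trans E).trans (OrderIso.setCongr _ _ h2).toOrderEmbedding⟩

/-- part `i` embeds into each of its tails -/
lemma P_emb_tic {i : ℕ} (hi : i ≤ n) (m : ℕ) :
    Nonempty (↥(S.P i) ↪o ↥(S.tic i m)) := by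
  obtain ⟨E⟩ := tail_emb (S.hsum i hi).mono (S.hsum i hi).star m
  have h1 : ↥(S.P i) ≃o ↥(⋃ j, S.Li i j) := OrderIso.setCongr _ _ (S.union_Li hi).symm
  exact ⟨h1.toOrderEmbedding.trans E⟩

/-- part `i` cannot embed into a bounded stack of sets, each embeddable in a block -/
lemma no_init {i : ℕ} (hi : i ≤ n) (m : ℕ) (Q : ℕ → Set L)
    (g : ℕ → ℕ) (hQg : ∀ r, Nonempty (↥(Q r) ↪o ↥(S.Li i (g r))))
    (hQlt : ∀ a b, a < b → ∀ x ∈ Q a, ∀ y ∈ Q b, x < y)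
    (hemb : Nonempty (↥(S.P i) ↪o ↥(⋃ (r : ℕ) (_ : r ≤ m), Q r))) : False := by
  obtain ⟨r0, hr0, ⟨u⟩⟩ := split_right (fun x hx => S.P_emb_above hi hx) Q hQlt m hemb
  have v : ↥(S.P i) ↪o ↥(S.Li i (g r0)) := u.trans (hQg r0).some
  obtain ⟨Mq, hMq, ⟨q⟩⟩ := (S.hsum i hi).inH (g r0)
  obtain ⟨τ, hτmono, -, hτmem⟩ := exists_strictMono_sel
    (fun _ => {j | Nonempty (↥(S.Li i (g r0)) ↪o ↥(S.Li i j))})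
    (fun _ => (S.hsum i hi).star (g r0)) 0
  set G : ↥(S.P i) ↪o ↥Mq := v.trans q.toOrderEmbedding with hG
  set Gv : ↥(S.P i) ↪o ℚ := G.trans (setVal Mq) with hGv
  refine (noAbs hMq).1 (fun t => img Gv (S.Li i (τ t))) ?_ ?_ ?_
  · intro a b hab x hx y hy
    exact img_lt Gv (fun u1 hu1 u2 hu2 =>
      (S.hsum i hi).mono (τ a) (τ b) (hτmono hab) u1 hu1 u2 hu2) x hx y hy
  · intro t
    exact ⟨(q.symm.toOrderEmbedding.trans (hτmem t).some).trans
      (imgIso Gv (S.Li_subset_P hi (τ t))).toOrderEmbedding⟩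
  · refine ⟨inclEmb (iUnion_subset fun t => ?_)⟩
    exact img_sub G (S.Li i (τ t))

end Setup

/-! ### SetInH closure under ω-sums, and witnesses for `TypeInH` -/

/-- a set that is an ω-sum (with (*)) of `SetInH` sets is `SetInH` -/
lemma setInH_of_omegaSum {T : Set L} [Countable L] {M : ℕ → Set L}
    (hu : (⋃ j, M j) = T) (hne : ∀ j, (M j).Nonempty)
    (hmono : ∀ a b, a < b → ∀ x ∈ M a, ∀ y ∈ M b, x < y)
    (hinH : ∀ j, SetInH (M j))
    (hstar : ∀ j, {r | Nonempty (↥(M j) ↪o ↥(M r))}.Infinite) : SetInH T := by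
  obtain ⟨ε⟩ := Order.embedding_from_countable_to_dense (α := ↥T) (β := ℚ)
  have hsub : ∀ j, M j ⊆ T := fun j => hu ▸ subset_iUnion M j
  set B : ℕ → Set ℚ := fun j => img ε (M j) with hB
  have hBiso : ∀ j, ↥(M j) ≃o ↥(B j) := fun j => imgIso ε (hsub j)
  have hInH : InH (⋃ j, B j) := by
    apply InH.omegaSum B
    · intro j
      obtain ⟨x, hx⟩ := hne j
      exact ⟨ε ⟨x, hsub j hx⟩, ⟨x, hsub j hx⟩, hx, rfl⟩
    · intro j
      obtain ⟨Mq, hMq, ⟨q⟩⟩ := hinH j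
      exact InH.iso hMq ⟨q.symm.trans (hBiso j)⟩
    · intro j
      apply Set.Infinite.mono ?_ (hstar j)
      intro r ⟨e⟩
      exact ⟨((hBiso j).symm.toOrderEmbedding.trans e).trans (hBiso r).toOrderEmbedding⟩
    · intro a b hab x hx y hy
      exact img_lt ε (fun u hu u' hu' => hmono a b hab u hu u' hu') x hx y hy
  refine ⟨⋃ j, B j, hInH, ?_⟩
  have h1 : ↥T ≃o ↥(⋃ j, M j) := OrderIso.setCongr _ _ hu.symm
  exact ⟨h1.trans (glueIso M B hmono
    (fun a b hab x hx y hy => img_lt ε (fun u hu u' hu' => hmono a b hab u hu u' hu') x hx y hy)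
    hBiso)⟩

namespace Setup

variable {n : ℕ} (S : Setup L n) [Countable L]

lemma setInH_P {i : ℕ} (hi : i ≤ n) : SetInH (S.P i) :=
  setInH_of_omegaSum (S.union_Li hi) (S.hsum i hi).nonemp (S.hsum i hi).mono
    (S.hsum i hi).inH (S.hsum i hi).star

/-- if part `b` embeds into infinitely many blocks of part `b+1`, the pair is in ℋ -/
lemma buildWitness {b : ℕ} (hb : b < n)
    (hinf : {r | Nonempty (↥(S.P b) ↪o ↥(S.Li (b + 1) r))}.Infinite) :
    TypeInH (↥(S.P b) ⊕ₗ ↥(S.P (b + 1))) := by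
  haveI : Countable (↥(S.P b) ⊕ₗ ↥(S.P (b + 1))) :=
    (inferInstance : Countable (↥(S.P b) ⊕ ↥(S.P (b + 1))))
  obtain ⟨ε⟩ := Order.embedding_from_countable_to_dense
    (α := ↥(S.P b) ⊕ₗ ↥(S.P (b + 1))) (β := ℚ)
  have hinL : StrictMono (fun a : ↥(S.P b) => toLex (Sum.inl a : ↥(S.P b) ⊕ ↥(S.P (b + 1)))) :=
    fun a a' h => Sum.Lex.inl_lt_inl_iff.mpr h
  have hinR : StrictMono (fun c : ↥(S.P (b + 1)) =>
      toLex (Sum.inr c : ↥(S.P b) ⊕ ↥(S.P (b + 1)))) :=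
    fun c c' h => Sum.Lex.inr_lt_inr_iff.mpr h
  set e0 : ↥(S.P b) ↪o ℚ := (OrderEmbedding.ofStrictMono _ hinL).trans ε with he0
  set e1 : ↥(S.P (b + 1)) ↪o ℚ := (OrderEmbedding.ofStrictMono _ hinR).trans ε with he1
  set N : ℕ → Set ℚ := fun r => Nat.rec (img e0 (S.P b)) (fun r _ => img e1 (S.Li (b + 1) r)) r
    with hN
  have hN0 : N 0 = img e0 (S.P b) := rfl
  have hNs : ∀ r, N (r + 1) = img e1 (S.Li (b + 1) r) := fun r => rfl
  have hiso0 : ↥(S.P b) ≃o ↥(N 0) := imgIso e0 (subset_refl _)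
  have hisos : ∀ r, ↥(S.Li (b + 1) r) ≃o ↥(N (r + 1)) :=
    fun r => imgIso e1 (S.Li_subset_P (by omega) r)
  have hNlt : ∀ a c, a < c → ∀ x ∈ N a, ∀ y ∈ N c, x < y := by
    intro a c hac x hx y hy
    match a, c with
    | 0, 0 => omega
    | 0, (r + 1) =>
      obtain ⟨u, hu, rfl⟩ := hx
      obtain ⟨w, hw, rfl⟩ := hy
      exact ε.strictMono (Sum.Lex.inl_lt_inr _ _)
    | (r + 1), 0 => omega
    | (r + 1), (r' + 1) =>
      obtain ⟨u, hu, rfl⟩ := hx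
      obtain ⟨w, hw, rfl⟩ := hy
      refine ε.strictMono (Sum.Lex.inr_lt_inr_iff.mpr ?_)
      exact Subtype.mk_lt_mk.mpr ((S.hsum (b + 1) (by omega)).mono r r' (by omega) u hu w hw)
  have hInH : InH (⋃ r, N r) := by
    apply InH.omegaSum N
    · intro r
      match r with
      | 0 =>
        obtain ⟨x, hx⟩ := S.P_nonempty (le_of_lt hb)
        exact ⟨e0 ⟨x, hx⟩, ⟨x, hx⟩, hx, rfl⟩
      | (r + 1) =>
        obtain ⟨x, hx⟩ := (S.hsum (b + 1) (by omega)).nonemp r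
        exact ⟨e1 ⟨x, S.Li_subset_P (by omega) r hx⟩, ⟨x, S.Li_subset_P (by omega) r hx⟩, hx, rfl⟩
    · intro r
      match r with
      | 0 =>
        obtain ⟨Mq, hMq, ⟨q⟩⟩ := S.setInH_P (le_of_lt hb)
        exact InH.iso hMq ⟨q.symm.trans hiso0⟩
      | (r + 1) =>
        obtain ⟨Mq, hMq, ⟨q⟩⟩ := (S.hsum (b + 1) (by omega)).inH r
        exact InH.iso hMq ⟨q.symm.trans (hisos r)⟩
    · intro r
      match r with
      | 0 =>
        apply Set.Infinite.mono ?_ (Set.Infinite.image (fun a _ c _ h => by simpa using h :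
          Set.InjOn (· + 1) {r | Nonempty (↥(S.P b) ↪o ↥(S.Li (b + 1) r))}) hinf)
        rintro j ⟨r, ⟨e⟩, rfl⟩
        exact ⟨(hiso0.symm.toOrderEmbedding.trans e).trans (hisos r).toOrderEmbedding⟩
      | (r + 1) =>
        apply Set.Infinite.mono ?_ (Set.Infinite.image (fun a _ c _ h => by simpa using h :
          Set.InjOn (· + 1) {s | Nonempty (↥(S.Li (b + 1) r) ↪o ↥(S.Li (b + 1) s))})
          ((S.hsum (b + 1) (by omega)).star r))
        rintro j ⟨s, ⟨e⟩, rfl⟩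
        exact ⟨((hisos r).symm.toOrderEmbedding.trans e).trans (hisos s).toOrderEmbedding⟩
    · exact hNlt
  refine ⟨⋃ r, N r, hInH, ?_⟩
  have hmem : ∀ x : ↥(S.P b) ⊕ₗ ↥(S.P (b + 1)), ε x ∈ ⋃ r, N r := by
    intro x
    rcases hx : ofLex x with a | c
    · have : x = toLex (Sum.inl a) := by rw [← hx]; rfl
      refine mem_iUnion.mpr ⟨0, ⟨a, a.2, ?_⟩⟩
      rw [this]; rfl
    · obtain ⟨r, hr⟩ := S.exists_block (by omega : b + 1 ≤ n) c.2
      have : x = toLex (Sum.inr c) := by rw [← hx]; rfl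
      refine mem_iUnion.mpr ⟨r + 1, ⟨c, hr, ?_⟩⟩
      rw [this]; rfl
  refine ⟨StrictMono.orderIsoOfSurjective (fun x => ⟨ε x, hmem x⟩)
    (fun u v huv => Subtype.mk_lt_mk.mpr (ε.strictMono huv)) ?_⟩
  rintro ⟨q, hq⟩
  obtain ⟨r, hr⟩ := mem_iUnion.mp hq
  rcases r with _ | r
  · rw [hN0] at hr
    obtain ⟨a, ha, hEq⟩ := hr
    exact ⟨toLex (Sum.inl a), Subtype.ext hEq⟩
  · rw [hNs] at hr
    obtain ⟨c, hc, hEq⟩ := hr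
    exact ⟨toLex (Sum.inr c), Subtype.ext hEq⟩

/-! ### the union of a final set of parts -/

def PU (j : ℕ) : Set L := ⋃ (t : ℕ) (_ : j ≤ t ∧ t ≤ n), S.P t

lemma P_subset_PU {j t : ℕ} (hjt : j ≤ t) (htn : t ≤ n) : S.P t ⊆ S.PU j := by
  intro x hx; exact mem_iUnion₂.mpr ⟨t, ⟨hjt, htn⟩, hx⟩

lemma PU_zero : S.PU 0 = univ := by
  apply eq_univ_of_forall
  intro x
  obtain ⟨t, htn, hx⟩ := S.exists_part x
  exact mem_iUnion₂.mpr ⟨t, ⟨Nat.zero_le t, htn⟩, hx⟩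

lemma pt_of_PU {j : ℕ} {x : L} (hx : x ∈ S.PU j) : j ≤ S.pt x := by
  obtain ⟨t, ⟨h1, h2⟩, hxt⟩ := mem_iUnion₂.mp hx
  rw [S.pt_eq h2 hxt]; exact h1

lemma mem_PU_of_pt {j : ℕ} {x : L} (h : j ≤ S.pt x) : x ∈ S.PU j :=
  mem_iUnion₂.mpr ⟨S.pt x, ⟨h, S.pt_le x⟩, S.pt_mem x⟩

/-- eventual part values of an embedding between part-unions -/
lemma eventual_map {s s' : ℕ} (E : ↥(S.PU s) ↪o ↥(S.PU s')) :
    ∃ m v : ℕ → ℕ,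
      (∀ t, s ≤ t → t ≤ n →
        (s' ≤ v t ∧ v t ≤ n ∧
          ∀ y, y ∈ S.tic t (m t) → ∀ (hY : y ∈ S.PU s),
            S.pt ((E ⟨y, hY⟩ : ↥(S.PU s')) : L) = v t)) ∧
      (∀ t, s ≤ t → t + 1 ≤ n → v t ≤ v (t + 1)) := by
  have hev : ∀ t, ∃ mv : ℕ × ℕ, s ≤ t → t ≤ n →
      (s' ≤ mv.2 ∧ mv.2 ≤ n ∧ ∀ y, y ∈ S.tic t mv.1 → ∀ (hY : y ∈ S.PU s),
        S.pt ((E ⟨y, hY⟩ : ↥(S.PU s')) : L) = mv.2) := by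
    intro t
    by_cases hts : s ≤ t ∧ t ≤ n
    · obtain ⟨hts, htn⟩ := hts
      set W : Set ℕ := {w | ∃ y, ∃ (_ : y ∈ S.P t) (hY : y ∈ S.PU s),
        S.pt ((E ⟨y, hY⟩ : ↥(S.PU s')) : L) = w} with hW
      have hWne : W.Nonempty := by
        obtain ⟨y, hy⟩ := S.P_nonempty htn
        exact ⟨_, y, hy, S.P_subset_PU hts htn hy, rfl⟩
      have hWbdd : ∀ w ∈ W, w ≤ n := by rintro w ⟨y, hy, hY, rfl⟩; exact S.pt_le _
      have hmax := Nat.sSup_mem hWne ⟨n, hWbdd⟩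
      obtain ⟨y0, hy0, hY0, hv0⟩ := hmax
      obtain ⟨j0, hj0⟩ := S.exists_block htn hy0
      refine ⟨(j0 + 1, sSup W), fun _ _ => ⟨?_, ?_, ?_⟩⟩
      · rw [← hv0]; exact S.pt_of_PU (E ⟨y0, hY0⟩).2
      · exact csSup_le hWne hWbdd
      · intro y hy hY
        obtain ⟨j, hjge, hyj⟩ := tailS_anti_mem _ hy
        have hlt0 : y0 < y := (S.hsum t htn).mono j0 j (by omega) y0 hj0 y hyj
        have h1 : sSup W ≤ S.pt ((E ⟨y, hY⟩ : ↥(S.PU s')) : L) := by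
          rw [← hv0]
          exact S.pt_mono (Subtype.coe_le_coe.mpr (E.monotone (Subtype.mk_le_mk.mpr hlt0.le)))
        have h2 : S.pt ((E ⟨y, hY⟩ : ↥(S.PU s')) : L) ≤ sSup W :=
          le_csSup ⟨n, hWbdd⟩ ⟨y, S.tic_subset_P htn _ hy, hY, rfl⟩
        omega
    · exact ⟨(0, 0), fun h1 h2 => absurd ⟨h1, h2⟩ hts⟩
  choose mv hmv using hev
  refine ⟨fun t => (mv t).1, fun t => (mv t).2, fun t h1 h2 => hmv t h1 h2, ?_⟩
  intro t hst htn1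
  obtain ⟨hs1, hn1, hp1⟩ := hmv t hst (by omega)
  obtain ⟨hs2, hn2, hp2⟩ := hmv (t + 1) (by omega) htn1
  obtain ⟨y, hy⟩ := S.tic_nonempty (by omega : t ≤ n) (mv t).1
  obtain ⟨y', hy'⟩ := S.tic_nonempty htn1 (mv (t + 1)).1
  have hyP : y ∈ S.P t := S.tic_subset_P (by omega) _ hy
  have hy'P : y' ∈ S.P (t + 1) := S.tic_subset_P htn1 _ hy'
  have hY : y ∈ S.PU s := S.P_subset_PU hst (by omega) hyP
  have hY' : y' ∈ S.PU s := S.P_subset_PU (by omega) htn1 hy'P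
  have hyy' : y < y' := S.hPlt t (by omega) (t + 1) htn1 (by omega) y hyP y' hy'P
  have hmono : S.pt ((E ⟨y, hY⟩ : ↥(S.PU s')) : L) ≤ S.pt ((E ⟨y', hY'⟩ : ↥(S.PU s')) : L) :=
    S.pt_mono (Subtype.coe_le_coe.mpr (E.monotone (Subtype.mk_le_mk.mpr hyy'.le)))
  rw [hp1 y hy hY, hp2 y' hy' hY'] at hmono
  exact hmono

/-- the double-collapse onto part `b+1` contradicts `hnH` -/
lemma collapse_hnH {b : ℕ} (hb : b < n) {D : Set L} (hPD : S.P b ⊆ D)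
    (hPD1 : S.P (b + 1) ⊆ D) (f : ↥D ↪o L) (mb mb1 : ℕ)
    (h0 : ∀ y : ↥D, y.1 ∈ S.tic b mb → f y ∈ S.P (b + 1))
    (h1 : ∀ y : ↥D, y.1 ∈ S.tic (b + 1) mb1 → f y ∈ S.P (b + 1)) : False := by
  obtain ⟨y1, hy1⟩ := S.tic_nonempty (by omega : b + 1 ≤ n) mb1
  have hy1P : y1 ∈ S.P (b + 1) := S.tic_subset_P (by omega) _ hy1
  set z : L := f ⟨y1, hPD1 hy1P⟩ with hz
  have hzP : z ∈ S.P (b + 1) := h1 _ hy1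
  obtain ⟨rs, hrs⟩ := S.exists_block (by omega : b + 1 ≤ n) hzP
  have hticD : S.tic b mb ⊆ D := fun y hy => hPD (S.tic_subset_P (by omega) _ hy)
  have hbound : img f (S.tic b mb) ⊆ ⋃ (r : ℕ) (_ : r ≤ rs), S.Li (b + 1) r := by
    rintro u ⟨a, haS, rfl⟩
    have huP : f a ∈ S.P (b + 1) := h0 a haS
    obtain ⟨sIdx, hsIdx⟩ := S.exists_block (by omega : b + 1 ≤ n) huP
    have haP : a.1 ∈ S.P b := S.tic_subset_P (by omega) _ haS
    have hlt1 : f a < z := f.strictMono (Subtype.mk_lt_mk.mpr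
      (S.hPlt b (by omega) (b + 1) (by omega) (by omega) a.1 haP y1 hy1P))
    rcases Nat.lt_or_ge rs sIdx with hcmp | hcmp
    · exact absurd ((S.hsum (b + 1) (by omega)).mono rs sIdx hcmp z hrs (f a) hsIdx)
        (not_lt.mpr hlt1.le)
    · exact mem_iUnion₂.mpr ⟨sIdx, hcmp, hsIdx⟩
  have E : ↥(S.P b) ↪o ↥(⋃ (r : ℕ) (_ : r ≤ rs), S.Li (b + 1) r) :=
    ((S.P_emb_tic (by omega) mb).some.trans
      (imgIso f hticD).toOrderEmbedding).trans (inclEmb hbound)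
  obtain ⟨r0, hr0, ⟨u⟩⟩ := split_right (fun x hx => S.P_emb_above (by omega) hx)
    (S.Li (b + 1)) (S.hsum (b + 1) (by omega)).mono rs ⟨E⟩
  have hinf : {r | Nonempty (↥(S.P b) ↪o ↥(S.Li (b + 1) r))}.Infinite := by
    apply Set.Infinite.mono ?_ ((S.hsum (b + 1) (by omega)).star r0)
    rintro j ⟨e⟩
    exact ⟨u.trans e⟩
  exact S.hnH b hb (S.buildWitness hb hinf)

/-- from a "skip" collapse, restrict to an adjacent embedding higher up -/
lemma restrict_emb {s s' : ℕ} (E : ↥(S.PU s) ↪o ↥(S.PU s'))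
    {j' b : ℕ} (hsb : s ≤ b) (hj' : b + 2 ≤ j') (hj'n : j' ≤ n)
    (ystar : L) (hy1 : ystar ∈ S.P b) (hyPU : ystar ∈ S.PU s)
    (hst : S.pt ((E ⟨ystar, hyPU⟩ : ↥(S.PU s')) : L) = j') :
    Nonempty (↥(S.PU (j' - 1)) ↪o ↥(S.PU j')) := by
  have hbn : b ≤ n := by omega
  have hsub : S.PU (j' - 1) ⊆ S.PU s := by
    intro x hx
    obtain ⟨t, ⟨ht1, ht2⟩, hxt⟩ := mem_iUnion₂.mp hx
    exact mem_iUnion₂.mpr ⟨t, ⟨by omega, ht2⟩, hxt⟩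
  have hmem : ∀ y : ↥(S.PU (j' - 1)), ((E ⟨y.1, hsub y.2⟩ : ↥(S.PU s')) : L) ∈ S.PU j' := by
    intro y
    obtain ⟨t, ⟨ht1, ht2⟩, hxt⟩ := mem_iUnion₂.mp y.2
    have hgt : ystar < y.1 := S.hPlt b hbn t ht2 (by omega) ystar hy1 y.1 hxt
    have h2 : S.pt ((E ⟨ystar, hyPU⟩ : ↥(S.PU s')) : L) ≤
        S.pt ((E ⟨y.1, hsub y.2⟩ : ↥(S.PU s')) : L) :=
      S.pt_mono (Subtype.coe_le_coe.mpr (E.monotone (Subtype.mk_le_mk.mpr hgt.le)))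
    rw [hst] at h2
    exact S.mem_PU_of_pt h2
  exact ⟨OrderEmbedding.ofStrictMono (fun y => ⟨_, hmem y⟩)
    (fun a c hac => Subtype.mk_lt_mk.mpr (Subtype.coe_lt_coe.mpr
      (E.strictMono (Subtype.mk_lt_mk.mpr (Subtype.coe_lt_coe.mpr hac)))))⟩

end Setup

lemma chain_lower (s s' e : ℕ) (v : ℕ → ℕ) (hbase : s' ≤ v s)
    (hstrict : ∀ t, s ≤ t → t + 1 ≤ e → v t < v (t + 1)) :
    ∀ t, s ≤ t → t ≤ e → s' + (t - s) ≤ v t := by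
  have key : ∀ t, s + t ≤ e → s' + t ≤ v (s + t) := by
    intro t
    induction t with
    | zero => intro _; simpa using hbase
    | succ t iht =>
      intro hte
      have h1 := iht (by omega)
      have h2 := hstrict (s + t) (by omega) (by omega)
      have h3 : s + (t + 1) = s + t + 1 := by omega
      rw [h3]
      omega
  intro t hst hte
  have := key (t - s) (by omega)
  have heq : s + (t - s) = t := by omega
  rw [heq] at this
  exact this

namespace Setup
variable {n : ℕ} (S : Setup L n) [Countable L]

/-- "Lemma W": no embedding of a final union of parts into a strictly smaller one -/
lemma lemW (d : ℕ) : ∀ j, 1 ≤ j → j ≤ n → n - j = d →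
    ¬ Nonempty (↥(S.PU (j - 1)) ↪o ↥(S.PU j)) := by
  induction d using Nat.strong_induction_on with
  | _ d ih =>
    rintro j hj1 hjn hd ⟨E⟩
    obtain ⟨m, v, hprop, hvmono⟩ := S.eventual_map E
    have hbase : j ≤ v (j - 1) := (hprop (j - 1) (le_refl _) (by omega)).1
    by_cases hc : ∃ b, j - 1 ≤ b ∧ b + 1 ≤ n ∧ v b = v (b + 1)
    · have hdec : DecidablePred (fun b => j - 1 ≤ b ∧ b + 1 ≤ n ∧ v b = v (b + 1)) :=
        Classical.decPred _
      obtain ⟨b, hbleast, hb1, hb2, hb3⟩ :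
          ∃ b, (∀ t, t < b → ¬(j - 1 ≤ t ∧ t + 1 ≤ n ∧ v t = v (t + 1))) ∧
            j - 1 ≤ b ∧ b + 1 ≤ n ∧ v b = v (b + 1) :=
        ⟨@Nat.find _ hdec hc, fun t ht => @Nat.find_min _ hdec hc t ht, @Nat.find_spec _ hdec hc⟩
      have hstrictb : ∀ t, j - 1 ≤ t → t + 1 ≤ b → v t < v (t + 1) := by
        intro t ht1 ht2
        have hne := hbleast t (by omega)
        push_neg at hne
        exact lt_of_le_of_ne (hvmono t ht1 (by omega)) (hne ht1 (by omega))
      have hlowb : j + (b - (j - 1)) ≤ v b :=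
        chain_lower (j - 1) j b v hbase hstrictb b hb1 (le_refl b)
      have hj'n : v b ≤ n := (hprop b (by omega) (by omega)).2.1
      have hj'b : b + 1 ≤ v b := by omega
      rcases eq_or_lt_of_le hj'b with heq | hgt
      · refine S.collapse_hnH (b := b) (by omega)
          (S.P_subset_PU (by omega) (by omega)) (S.P_subset_PU (by omega) (by omega))
          (E.trans (setVal (S.PU j))) (m b) (m (b + 1)) ?_ ?_
        · intro y hy
          have hpt := (hprop b (by omega) (by omega)).2.2 y.1 hy y.2
          have hval : S.pt ((E.trans (setVal (S.PU j))) y) = b + 1 := by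
            rw [heq]; exact hpt
          exact hval ▸ S.pt_mem _
        · intro y hy
          have hpt := (hprop (b + 1) (by omega) (by omega)).2.2 y.1 hy y.2
          have hval : S.pt ((E.trans (setVal (S.PU j))) y) = b + 1 := by
            rw [heq, hb3]; exact hpt
          exact hval ▸ S.pt_mem _
      · obtain ⟨ystar, hystar⟩ := S.tic_nonempty (by omega : b ≤ n) (m b)
        have hyP : ystar ∈ S.P b := S.tic_subset_P (by omega) _ hystar
        have hyPU : ystar ∈ S.PU (j - 1) := S.P_subset_PU (by omega) (by omega) hyP
        have hpt : S.pt ((E ⟨ystar, hyPU⟩ : ↥(S.PU j)) : L) = v b :=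
          (hprop b (by omega) (by omega)).2.2 ystar hystar hyPU
        have hres := S.restrict_emb E (by omega) (by omega : b + 2 ≤ v b) hj'n ystar hyP hyPU hpt
        exact ih (n - v b) (by omega) (v b) (by omega) (by omega) rfl hres
    · push_neg at hc
      have hstrict : ∀ t, j - 1 ≤ t → t + 1 ≤ n → v t < v (t + 1) := fun t h1 h2 =>
        lt_of_le_of_ne (hvmono t h1 h2) (hc t h1 h2)
      have h1 : j + (n - (j - 1)) ≤ v n :=
        chain_lower (j - 1) j n v hbase hstrict n (by omega) (le_refl n)
      have h2 : v n ≤ n := (hprop n (by omega) (le_refl n)).2.1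
      omega

/-- "Fact B": every self-embedding eventually maps each part into itself -/
lemma factB (h : L ↪o L) {i : ℕ} (hi : i ≤ n) :
    ∃ m, ∀ y, y ∈ S.tic i m → h y ∈ S.P i := by
  have hPU0 : ∀ x : L, x ∈ S.PU 0 := by
    intro x; rw [S.PU_zero]; trivial
  set E : ↥(S.PU 0) ↪o ↥(S.PU 0) :=
    OrderEmbedding.ofStrictMono (fun y => ⟨h y.1, hPU0 _⟩)
      (fun a c hac => Subtype.mk_lt_mk.mpr (h.strictMono (Subtype.coe_lt_coe.mpr hac)))
    with hE
  obtain ⟨m, v, hprop, hvmono⟩ := S.eventual_map E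
  by_cases hcol : ∃ b, b + 1 ≤ n ∧ v b = v (b + 1)
  · exfalso
    have hdec : DecidablePred (fun b => b + 1 ≤ n ∧ v b = v (b + 1)) := Classical.decPred _
    obtain ⟨b, hbleast, hb2, hb3⟩ :
        ∃ b, (∀ t, t < b → ¬(t + 1 ≤ n ∧ v t = v (t + 1))) ∧ b + 1 ≤ n ∧ v b = v (b + 1) :=
      ⟨@Nat.find _ hdec hcol, fun t ht => @Nat.find_min _ hdec hcol t ht,
        @Nat.find_spec _ hdec hcol⟩
    have hstrictb : ∀ t, 0 ≤ t → t + 1 ≤ b → v t < v (t + 1) := by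
      intro t _ ht2
      have hne := hbleast t (by omega)
      push_neg at hne
      exact lt_of_le_of_ne (hvmono t (by omega) (by omega)) (hne (by omega))
    have hlowb : 0 + (b - 0) ≤ v b :=
      chain_lower 0 0 b v (by omega) hstrictb b (by omega) (le_refl b)
    have hj'n : v b ≤ n := (hprop b (by omega) (by omega)).2.1
    have hbb : b ≤ v b := by omega
    rcases eq_or_lt_of_le hbb with heq | hgt
    · -- v b = b : contradiction with no_init
      obtain ⟨y1, hy1⟩ := S.tic_nonempty (by omega : b + 1 ≤ n) (m (b + 1))
      have hy1P : y1 ∈ S.P (b + 1) := S.tic_subset_P (by omega) _ hy1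
      set z : L := h y1 with hz
      have hzpt : S.pt z = b := by
        have hh := (hprop (b + 1) (by omega) (by omega)).2.2 y1 hy1 (hPU0 y1)
        rw [← hb3, ← heq] at hh
        exact hh
      have hzP : z ∈ S.P b := hzpt ▸ S.pt_mem z
      obtain ⟨rs, hrs⟩ := S.exists_block (by omega : b ≤ n) hzP
      set f : ↥(S.PU 0) ↪o L := E.trans (setVal (S.PU 0)) with hf
      have hbound : img f (S.tic b (m b)) ⊆ ⋃ (r : ℕ) (_ : r ≤ rs), S.Li b r := by
        rintro u ⟨a, haS, rfl⟩
        have hupt : S.pt (f a) = b := by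
          have hh := (hprop b (by omega) (by omega)).2.2 a.1 haS a.2
          rw [← heq] at hh
          exact hh
        have huP : f a ∈ S.P b := hupt ▸ S.pt_mem _
        obtain ⟨sIdx, hsIdx⟩ := S.exists_block (by omega : b ≤ n) huP
        have haP : a.1 ∈ S.P b := S.tic_subset_P (by omega) _ haS
        have hlt1 : f a < z := h.strictMono
          (S.hPlt b (by omega) (b + 1) (by omega) (by omega) a.1 haP y1 hy1P)
        rcases Nat.lt_or_ge rs sIdx with hcmp | hcmp
        · exact absurd ((S.hsum b (by omega)).mono rs sIdx hcmp z hrs (f a) hsIdx)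
            (not_lt.mpr hlt1.le)
        · exact mem_iUnion₂.mpr ⟨sIdx, hcmp, hsIdx⟩
      have hticPU : S.tic b (m b) ⊆ S.PU 0 := fun y _ => hPU0 y
      have E2 : ↥(S.P b) ↪o ↥(⋃ (r : ℕ) (_ : r ≤ rs), S.Li b r) :=
        ((S.P_emb_tic (by omega) (m b)).some.trans
          (imgIso f hticPU).toOrderEmbedding).trans (inclEmb hbound)
      exact S.no_init (by omega : b ≤ n) rs (S.Li b) id
        (fun r => ⟨inclEmb (subset_refl _)⟩) (S.hsum b (by omega)).mono ⟨E2⟩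
    · have hj'b : b + 1 ≤ v b := hgt
      rcases eq_or_lt_of_le hj'b with heq | hgt2
      · refine S.collapse_hnH (b := b) (by omega)
          (fun x _ => hPU0 x) (fun x _ => hPU0 x)
          (E.trans (setVal (S.PU 0))) (m b) (m (b + 1)) ?_ ?_
        · intro y hy
          have hpt := (hprop b (by omega) (by omega)).2.2 y.1 hy y.2
          have hval : S.pt ((E.trans (setVal (S.PU 0))) y) = b + 1 := by
            rw [heq]; exact hpt
          exact hval ▸ S.pt_mem _
        · intro y hy
          have hpt := (hprop (b + 1) (by omega) (by omega)).2.2 y.1 hy y.2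
          have hval : S.pt ((E.trans (setVal (S.PU 0))) y) = b + 1 := by
            rw [heq, hb3]; exact hpt
          exact hval ▸ S.pt_mem _
      · obtain ⟨ystar, hystar⟩ := S.tic_nonempty (by omega : b ≤ n) (m b)
        have hyP : ystar ∈ S.P b := S.tic_subset_P (by omega) _ hystar
        have hpt : S.pt ((E ⟨ystar, hPU0 ystar⟩ : ↥(S.PU 0)) : L) = v b :=
          (hprop b (by omega) (by omega)).2.2 ystar hystar (hPU0 ystar)
        have hres := S.restrict_emb E (by omega) (by omega : b + 2 ≤ v b) hj'n ystar hyP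
          (hPU0 ystar) hpt
        exact S.lemW (n - v b) (v b) (by omega) (by omega) rfl hres
  · -- no collapse: v is the identity on [0,n]
    push_neg at hcol
    have hstrict : ∀ t, t + 1 ≤ n → v t < v (t + 1) := fun t h2 =>
      lt_of_le_of_ne (hvmono t (by omega) h2) (hcol t h2)
    have hge : ∀ t, t ≤ n → t ≤ v t := by
      intro t htn
      have := chain_lower 0 0 n v (by omega)
        (fun t _ h2 => hstrict t h2) t (by omega) htn
      omega
    have hle : ∀ k, k ≤ n → v (n - k) ≤ n - k := by
      intro k
      induction k with
      | zero => intro _; simpa using (hprop n (by omega) (le_refl n)).2.1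
      | succ k ihk =>
        intro hkn
        have h1 := ihk (by omega)
        have h2 := hstrict (n - (k + 1)) (by omega)
        have h3 : n - (k + 1) + 1 = n - k := by omega
        rw [h3] at h2
        omega
    have hvi : v i = i := by
      have h1 := hge i hi
      have h2 := hle (n - i) (by omega)
      have h3 : n - (n - i) = i := by omega
      rw [h3] at h2
      omega
    refine ⟨m i, fun y hy => ?_⟩
    have hpt := (hprop i (by omega) hi).2.2 y hy (hPU0 y)
    rw [hvi] at hpt
    exact hpt ▸ S.pt_mem _

/-- the climb lemma: images of tails eventually exceed any point of the part -/
lemma climb (h : L ↪o L) {i : ℕ} (hi : i ≤ n) {m : ℕ}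
    (hm : ∀ y, y ∈ S.tic i m → h y ∈ S.P i) {x : L} (hx : x ∈ S.P i) :
    ∃ m', m ≤ m' ∧ ∀ y, y ∈ S.tic i m' → h y ∈ S.P i ∧ x < h y := by
  by_cases hc : ∃ j, m ≤ j ∧ ∃ y ∈ S.Li i j, x < h y
  · obtain ⟨j, hj, y0, hy0, hxy⟩ := hc
    refine ⟨j + 1, by omega, fun y hy => ⟨hm y (S.tic_mono (by omega) hy), ?_⟩⟩
    obtain ⟨j', hj', hyj'⟩ := tailS_anti_mem _ hy
    have hlt0 : y0 < y := (S.hsum i hi).mono j j' (by omega) y0 hy0 y hyj'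
    exact lt_trans hxy (h.strictMono hlt0)
  · exfalso
    push_neg at hc
    obtain ⟨rx, hrx⟩ := S.exists_block hi hx
    set f : ↥(S.tic i m) ↪o L := (setVal (S.tic i m)).trans h with hf
    have hbound : img f (S.tic i m) ⊆ ⋃ (r : ℕ) (_ : r ≤ rx), S.Li i r := by
      rintro u ⟨a, haS, rfl⟩
      have huP : f a ∈ S.P i := hm a.1 haS
      obtain ⟨sIdx, hsIdx⟩ := S.exists_block hi huP
      obtain ⟨j', hj', hyj'⟩ := tailS_anti_mem _ haS
      have hle : f a ≤ x := hc j' hj' a.1 hyj'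
      rcases Nat.lt_or_ge rx sIdx with hcmp | hcmp
      · exact absurd ((S.hsum i hi).mono rx sIdx hcmp x hrx (f a) hsIdx) (not_lt.mpr hle)
      · exact mem_iUnion₂.mpr ⟨sIdx, hcmp, hsIdx⟩
    have E2 : ↥(S.P i) ↪o ↥(⋃ (r : ℕ) (_ : r ≤ rx), S.Li i r) :=
      ((S.P_emb_tic hi m).some.trans
        (imgIso f (subset_refl _)).toOrderEmbedding).trans (inclEmb hbound)
    exact S.no_init hi rx (S.Li i) id (fun r => ⟨inclEmb (subset_refl _)⟩)
      (S.hsum i hi).mono ⟨E2⟩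

end Setup

/-! ### copies and the refinement chain -/

/-- the intersection of the first `k+1` copies -/
def Deep (A : ℕ → Set L) (k : ℕ) : Set L := ⋂ (j : ℕ) (_ : j ≤ k), A j

lemma Deep_subset (A : ℕ → Set L) {j k : ℕ} (h : j ≤ k) : Deep A k ⊆ A j := by
  intro x hx; exact mem_iInter₂.mp hx j h

lemma Deep_mono (A : ℕ → Set L) {k k' : ℕ} (h : k ≤ k') : Deep A k' ⊆ Deep A k := by
  intro x hx
  exact mem_iInter₂.mpr fun j hj => mem_iInter₂.mp hx j (by omega)

lemma refine_deep {A : ℕ → Set L} (hdec : ∀ k, copyLE (A (k + 1)) (A k)) :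
    ∀ k, ∀ C ∈ Copies L, C ⊆ A k → ∃ D ∈ Copies L, D ⊆ C ∩ Deep A k := by
  intro k
  induction k with
  | zero =>
    intro C hC hCA
    refine ⟨C, hC, subset_inter (subset_refl C) ?_⟩
    intro x hx
    exact mem_iInter₂.mpr fun j hj => by
      have : j = 0 := by omega
      exact this ▸ hCA hx
  | succ k ihk =>
    intro C hC hCA
    obtain ⟨D1, hD1, hD1sub⟩ := hdec k C hC hCA
    obtain ⟨D, hD, hDsub⟩ := ihk D1 hD1 (fun x hx => (hD1sub hx).2)
    refine ⟨D, hD, ?_⟩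
    intro x hx
    have hx1 := hDsub hx
    have hxC : x ∈ C := (hD1sub hx1.1).1
    refine ⟨hxC, mem_iInter₂.mpr fun j hj => ?_⟩
    rcases Nat.lt_or_ge j (k + 1) with hj' | hj'
    · exact mem_iInter₂.mp hx1.2 j (by omega)
    · have : j = k + 1 := by omega
      exact this ▸ hCA hxC

namespace Setup
variable {n : ℕ} (S : Setup L n) [Countable L]

lemma PFin_cover : (⋃ i : Fin (n + 1), S.P i.1) = univ := by
  apply eq_univ_of_forall
  intro x
  obtain ⟨t, htn, hx⟩ := S.exists_part x
  exact mem_iUnion.mpr ⟨⟨t, by omega⟩, hx⟩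

lemma PFin_lt : ∀ i j : Fin (n + 1), i < j → ∀ x ∈ S.P i.1, ∀ y ∈ S.P j.1, x < y := by
  intro i j hij x hx y hy
  exact S.hPlt i.1 (by omega) j.1 (by omega) (by exact hij) x hx y hy

/-- a copy of `L` inside a given copy, with each part-piece above a prescribed point -/
lemma copy_above {C0 : Set L} (hC0 : C0 ∈ Copies L) (x : ℕ → L)
    (hx : ∀ i, i ≤ n → x i ∈ S.P i) :
    ∃ C, C ∈ Copies L ∧ C ⊆ C0 ∧ ∀ i, i ≤ n → ∀ z, z ∈ C → z ∈ S.P i → x i < z := by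
  obtain ⟨iso⟩ := hC0
  set h : L ↪o L := iso.symm.toOrderEmbedding.trans (setVal C0) with hh
  have hrange : ∀ y, h y ∈ C0 := fun y => (iso.symm y).2
  have hstep : ∀ i, ∃ mm : ℕ, i ≤ n → ∀ y, y ∈ S.tic i mm → h y ∈ S.P i ∧ x i < h y := by
    intro i
    by_cases hi : i ≤ n
    · obtain ⟨m, hm⟩ := S.factB h hi
      obtain ⟨m', _, hm'⟩ := S.climb h hi hm (hx i hi)
      exact ⟨m', fun _ => hm'⟩
    · exact ⟨0, fun hcon => absurd hcon hi⟩
  choose m' hm' using hstep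
  have G : ↥(⋃ i : Fin (n + 1), S.P i.1) ↪o ↥(⋃ i : Fin (n + 1), S.tic i.1 (m' i.1)) :=
    glueEmb _ _ id strictMono_id S.PFin_lt
      (fun i j hij u hu w hw => S.hPlt i.1 (by omega) j.1 (by omega) (by exact hij) u
        (S.tic_subset_P (by omega) _ hu) w (S.tic_subset_P (by omega) _ hw))
      (fun i => (S.P_emb_tic (by omega : i.1 ≤ n) (m' i.1)).some)
  set full : L ↪o L :=
    (((OrderIso.Set.univ (α := L)).symm.toOrderEmbedding.trans
      (OrderIso.setCongr _ _ S.PFin_cover.symm).toOrderEmbedding).trans G).trans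
      ((setVal _).trans h) with hfull
  have hfullmem : ∀ w : L, ∃ i : Fin (n + 1), ∃ u, u ∈ S.tic i.1 (m' i.1) ∧ full w = h u := by
    intro w
    obtain ⟨i, hi⟩ := mem_iUnion.mp
      (G ((OrderIso.setCongr _ _ S.PFin_cover.symm) ((OrderIso.Set.univ (α := L)).symm w))).2
    exact ⟨i, _, hi, rfl⟩
  refine ⟨Set.range full, ⟨(rangeIso full).symm⟩, ?_, ?_⟩
  · rintro z ⟨w, rfl⟩
    obtain ⟨i, u, hu, heq⟩ := hfullmem w
    rw [heq]; exact hrange u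
  · rintro i hi z ⟨w, rfl⟩ hzP
    obtain ⟨i', u, hu, heq⟩ := hfullmem w
    have hP' : h u ∈ S.P i'.1 ∧ x i'.1 < h u := hm' i'.1 (by omega) u hu
    have hii : i = i'.1 := by
      by_contra hne
      have hd := S.hdisj i hi i'.1 (by omega) hne
      rw [heq] at hzP
      exact absurd hP'.1 (disjoint_left.mp hd hzP)
    rw [heq, hii]
    exact hP'.2

/-- one step of the fusion: a column of pieces inside `Deep A k`, above given bounds -/
lemma step (A : ℕ → Set L) (hA : ∀ k, A k ∈ Copies L) (hdec : ∀ k, copyLE (A (k + 1)) (A k))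
    (k : ℕ) (x : ℕ → L) (hx : ∀ i, i ≤ n → x i ∈ S.P i) :
    ∃ q : (ℕ → Set L) × (ℕ → L), ∀ i, i ≤ n →
      (q.1 i ⊆ Deep A k ∩ S.P i) ∧ Nonempty (↥(S.Li i k) ≃o ↥(q.1 i)) ∧
      (∀ z ∈ q.1 i, x i < z) ∧ (q.2 i ∈ S.P i) ∧ (∀ z ∈ q.1 i, z < q.2 i) ∧ x i < q.2 i := by
  obtain ⟨C, hC, hCA, hCabove⟩ := S.copy_above (hA k) x hx
  obtain ⟨D, hD, hDsub⟩ := refine_deep hdec k C hC hCA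
  obtain ⟨isoD⟩ := hD
  set hDe : L ↪o L := isoD.symm.toOrderEmbedding.trans (setVal D) with hhD
  have hrange : ∀ y, hDe y ∈ D := fun y => (isoD.symm y).2
  have hper : ∀ i, ∃ pc : Set L × L, i ≤ n →
      (pc.1 ⊆ Deep A k ∩ S.P i) ∧ Nonempty (↥(S.Li i k) ≃o ↥(pc.1)) ∧
      (∀ z ∈ pc.1, x i < z) ∧ (pc.2 ∈ S.P i) ∧ (∀ z ∈ pc.1, z < pc.2) ∧ x i < pc.2 := by
    intro i
    by_cases hi : i ≤ n
    swap
    · exact ⟨(∅, x i), fun h => absurd h hi⟩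
    obtain ⟨m, hm⟩ := S.factB hDe hi
    obtain ⟨js, hjs_mem, hjs_gt⟩ := ((S.hsum i hi).star k).exists_gt m
    obtain ⟨u⟩ := hjs_mem
    set fullp : ↥(S.Li i k) ↪o L := u.trans ((setVal (S.Li i js)).trans hDe) with hfp
    set piece : Set L := img fullp (S.Li i k) with hpc
    have hpmem : ∀ z ∈ piece, (z ∈ D ∧ z ∈ S.P i) := by
      rintro z ⟨a, haS, rfl⟩
      have h1 : ((u a) : L) ∈ S.tic i m := S.Li_subset_tic (by omega) (u a).2
      exact ⟨hrange _, hm _ h1⟩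
    obtain ⟨y', hy'⟩ := (S.hsum i hi).nonemp (js + 1)
    refine ⟨(piece, hDe y'), fun _ => ⟨?_, ⟨imgIso fullp (subset_refl _)⟩, ?_, ?_, ?_, ?_⟩⟩
    · intro z hz
      exact ⟨(hDsub (hpmem z hz).1).2, (hpmem z hz).2⟩
    · intro z hz
      exact hCabove i hi z (hDsub (hpmem z hz).1).1 (hpmem z hz).2
    · exact hm _ (S.Li_subset_tic (by omega) hy')
    · rintro z ⟨a, haS, rfl⟩
      exact hDe.strictMono ((S.hsum i hi).mono js (js + 1) (by omega) _ (u a).2 y' hy')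
    · have h1 : hDe y' ∈ S.P i := hm _ (S.Li_subset_tic (by omega) hy')
      have h2 : hDe y' ∈ D := hrange y'
      exact hCabove i hi _ (hDsub h2).1 h1
  choose pc hpc using hper
  exact ⟨(fun i => (pc i).1, fun i => (pc i).2), fun i hi => hpc i hi⟩

include S in
/-- the fusion: a lower bound for the whole chain -/
lemma exists_B (A : ℕ → Set L) (hA : ∀ k, A k ∈ Copies L)
    (hdec : ∀ k, copyLE (A (k + 1)) (A k)) :
    ∃ B ∈ Copies L, ∀ k, copyLE B (A k) := by
  classical
  have hx0e : ∀ i, ∃ z : L, i ≤ n → z ∈ S.P i := by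
    intro i
    by_cases hi : i ≤ n
    · obtain ⟨z, hz⟩ := S.P_nonempty hi; exact ⟨z, fun _ => hz⟩
    · obtain ⟨z, hz⟩ := S.P_nonempty (Nat.zero_le n); exact ⟨z, fun h => absurd h hi⟩
  choose x0 hx0p using hx0e
  have hrec := fun (k : ℕ) (x : ℕ → L) (hx : ∀ i, i ≤ n → x i ∈ S.P i) =>
    S.step A hA hdec k x hx
  let T := {q : (ℕ → Set L) × (ℕ → L) // ∀ i, i ≤ n → q.2 i ∈ S.P i}
  let init : T := ⟨(fun _ => (∅ : Set L), x0), fun i hi => hx0p i hi⟩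
  let stp : ℕ → T → T := fun k prev =>
    ⟨(hrec k prev.1.2 prev.2).choose,
      fun i hi => ((hrec k prev.1.2 prev.2).choose_spec i hi).2.2.2.1⟩
  let st : ℕ → T := fun k => Nat.rec (stp 0 init) (fun k prev => stp (k + 1) prev) k
  let xs : ℕ → (ℕ → L) := fun k => Nat.rec x0 (fun k _ => (st k).1.2) k
  have hcol : ∀ k, ∀ i, i ≤ n →
      ((st k).1.1 i ⊆ Deep A k ∩ S.P i) ∧ Nonempty (↥(S.Li i k) ≃o ↥((st k).1.1 i)) ∧
      (∀ z ∈ (st k).1.1 i, xs k i < z) ∧ ((st k).1.2 i ∈ S.P i) ∧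
      (∀ z ∈ (st k).1.1 i, z < (st k).1.2 i) ∧ xs k i < (st k).1.2 i := by
    intro k
    cases k with
    | zero => exact fun i hi => (hrec 0 x0 init.2).choose_spec i hi
    | succ k => exact fun i hi => (hrec (k + 1) (st k).1.2 (st k).2).choose_spec i hi
  have hxs_succ : ∀ k, xs (k + 1) = (st k).1.2 := fun k => rfl
  -- bound monotonicity
  have hbnd_mono : ∀ i, i ≤ n → ∀ k k', k ≤ k' → (st k).1.2 i ≤ (st k').1.2 i := by
    intro i hi k k' hkk
    induction k' with
    | zero => have : k = 0 := by omega
              exact this ▸ le_refl _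
    | succ k' ihk =>
      rcases Nat.lt_or_ge k (k' + 1) with hlt | hge
      · have h1 : (st k).1.2 i ≤ (st k').1.2 i := ihk (by omega)
        have h2 : xs (k' + 1) i < (st (k' + 1)).1.2 i := (hcol (k' + 1) i hi).2.2.2.2.2
        rw [hxs_succ k'] at h2
        exact le_trans h1 h2.le
      · have : k = k' + 1 := by omega
        exact this ▸ le_refl _
  set piece : ℕ → ℕ → Set L := fun i k => (st k).1.1 i with hpiece
  set bnd : ℕ → ℕ → L := fun i k => (st k).1.2 i with hbnd
  -- pieces ordered along k
  have hpieces_lt : ∀ i, i ≤ n → ∀ k k', k < k' →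
      ∀ z ∈ piece i k, ∀ z' ∈ piece i k', z < z' := by
    intro i hi k k' hkk z hz z' hz'
    obtain ⟨t, rfl⟩ : ∃ t, k' = t + 1 := ⟨k' - 1, by omega⟩
    have h1 : z < bnd i k := (hcol k i hi).2.2.2.2.1 z hz
    have h2 : bnd i k ≤ bnd i t := hbnd_mono i hi k t (by omega)
    have h3 : xs (t + 1) i < z' := (hcol (t + 1) i hi).2.2.1 z' hz'
    rw [hxs_succ t] at h3
    exact lt_trans (lt_of_lt_of_le h1 h2) h3
  set Bi : ℕ → Set L := fun i => ⋃ k, piece i k with hBi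
  set B : Set L := ⋃ i : Fin (n + 1), Bi i.1 with hB
  have hBi_sub : ∀ i, i ≤ n → Bi i ⊆ S.P i := by
    intro i hi z hz
    obtain ⟨k, hk⟩ := mem_iUnion.mp hz
    exact ((hcol k i hi).1 hk).2
  have hBi_deep : ∀ i, i ≤ n → ∀ z ∈ Bi i, ∀ k, z ∈ piece i k → z ∈ Deep A k := by
    intro i hi z _ k hk
    exact ((hcol k i hi).1 hk).1
  -- B is a copy of L
  have hBcopy : B ∈ Copies L := by
    have isoBi : ∀ i : Fin (n + 1), ↥(Bi i.1) ≃o ↥(S.P i.1) := by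
      intro i
      have hi : i.1 ≤ n := by omega
      refine (glueIso (fun k => piece i.1 k) (S.Li i.1) ?_ (S.hsum i.1 hi).mono
        (fun k => ((hcol k i.1 hi).2.1).some.symm)).trans
        (OrderIso.setCongr _ _ (S.union_Li hi))
      intro a b hab z hz z' hz'
      exact hpieces_lt i.1 hi a b hab z hz z' hz'
    have isoB : ↥B ≃o ↥(⋃ i : Fin (n + 1), S.P i.1) := by
      refine glueIso (fun i : Fin (n + 1) => Bi i.1) (fun i : Fin (n + 1) => S.P i.1)
        ?_ S.PFin_lt isoBi
      intro i j hij z hz z' hz'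
      exact S.hPlt i.1 (by omega) j.1 (by omega) (by exact hij) z
        (hBi_sub i.1 (by omega) hz) z' (hBi_sub j.1 (by omega) hz')
    exact ⟨(isoB.trans (OrderIso.setCongr _ _ S.PFin_cover)).trans (OrderIso.Set.univ)⟩
  refine ⟨B, hBcopy, fun k => ?_⟩
  intro C hC hCB
  cases k with
  | zero =>
    refine ⟨C, hC, subset_inter (subset_refl C) (fun z hz => ?_)⟩
    have hzB := hCB hz
    obtain ⟨i, hzi⟩ := mem_iUnion.mp hzB
    obtain ⟨t, ht⟩ := mem_iUnion.mp hzi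
    exact Deep_subset A (Nat.zero_le t) (hBi_deep i.1 (by omega) z hzi t ht)
  | succ k =>
    obtain ⟨isoC⟩ := hC
    set g : L ↪o L := isoC.symm.toOrderEmbedding.trans (setVal C) with hg
    have hgrange : ∀ y, g y ∈ C := fun y => (isoC.symm y).2
    have hcut : ∀ i, ∃ mm, i ≤ n → ∀ y, y ∈ S.tic i mm → g y ∈ S.P i ∧ bnd i k < g y := by
      intro i
      by_cases hi : i ≤ n
      · obtain ⟨m, hm⟩ := S.factB g hi
        obtain ⟨m', _, hm'⟩ := S.climb g hi hm ((hcol k i hi).2.2.2.1)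
        exact ⟨m', fun _ => hm'⟩
      · exact ⟨0, fun h => absurd h hi⟩
    choose mC hmC using hcut
    set ms : ℕ := Finset.sup (Finset.range (n + 1)) mC with hms
    have hple : ∀ i, i ≤ n → mC i ≤ ms :=
      fun i hi => Finset.le_sup (Finset.mem_range.mpr (by omega))
    have G : ↥(⋃ i : Fin (n + 1), S.P i.1) ↪o ↥(⋃ i : Fin (n + 1), S.tic i.1 ms) :=
      glueEmb _ _ id strictMono_id S.PFin_lt
        (fun i j hij u hu w hw => S.hPlt i.1 (by omega) j.1 (by omega) (by exact hij) u
          (S.tic_subset_P (by omega) _ hu) w (S.tic_subset_P (by omega) _ hw))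
        (fun i => (S.P_emb_tic (by omega : i.1 ≤ n) ms).some)
    set full : L ↪o L :=
      ((((OrderIso.Set.univ (α := L)).symm.toOrderEmbedding.trans
        (OrderIso.setCongr _ _ S.PFin_cover.symm).toOrderEmbedding).trans G).trans
        (setVal _)).trans g with hfull
    have hfullmem : ∀ w : L, ∃ i : Fin (n + 1), ∃ u, u ∈ S.tic i.1 ms ∧ full w = g u := by
      intro w
      obtain ⟨i, hi⟩ := mem_iUnion.mp
        (G ((OrderIso.setCongr _ _ S.PFin_cover.symm) ((OrderIso.Set.univ (α := L)).symm w))).2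
      exact ⟨i, _, hi, rfl⟩
    refine ⟨Set.range full, ⟨(rangeIso full).symm⟩, ?_⟩
    rintro z ⟨w, rfl⟩
    obtain ⟨i, u, hu, heq⟩ := hfullmem w
    have hu' : u ∈ S.tic i.1 (mC i.1) := S.tic_mono (hple i.1 (by omega)) hu
    have hgu := hmC i.1 (by omega) u hu'
    have hguC : g u ∈ C := hgrange u
    refine heq ▸ ⟨hguC, ?_⟩
    -- locate g u inside B
    have hguB : g u ∈ B := hCB hguC
    obtain ⟨i', hzi⟩ := mem_iUnion.mp hguB
    obtain ⟨t, ht⟩ := mem_iUnion.mp hzi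
    have hii : i'.1 = i.1 := by
      by_contra hne
      have hd := S.hdisj i'.1 (by omega) i.1 (by omega) hne
      exact absurd hgu.1 (disjoint_left.mp hd (hBi_sub i'.1 (by omega) hzi))
    have htk : k + 1 ≤ t := by
      by_contra hlt
      push_neg at hlt
      have h1 : g u < bnd i'.1 t := (hcol t i'.1 (by omega)).2.2.2.2.1 _ ht
      have h2 : bnd i'.1 t ≤ bnd i'.1 k := hbnd_mono i'.1 (by omega) t k (by omega)
      rw [hii] at h1 h2
      exact absurd hgu.2 (not_lt.mpr (le_of_lt (lt_of_lt_of_le h1 h2)))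
    exact Deep_subset A (le_refl (k + 1)) (Deep_mono A htk (hBi_deep i'.1 (by omega) _ hzi t ht))

end Setup
end S15

/-- for a finite sum of ω-sums as in Statement 14, the separative
modification `⟨ℙ(L), ≤*⟩` is σ-closed. -/
theorem stmt15 {L : Type*} [LinearOrder L] [Countable L] (n : ℕ) (P : ℕ → Set L)
    (hcover : (⋃ i ≤ n, P i) = univ)
    (hdisj : ∀ i ≤ n, ∀ j ≤ n, i ≠ j → Disjoint (P i) (P j))
    (hlt : ∀ i ≤ n, ∀ j ≤ n, i < j → ∀ x ∈ P i, ∀ y ∈ P j, x < y)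
    (hsum : ∀ i ≤ n, ∃ Li : ℕ → Set L, IsOmegaSumH (P i) Li)
    (hnH : ∀ i < n, ¬ TypeInH (↥(P i) ⊕ₗ ↥(P (i + 1))))
    (A : ℕ → Set L) (hA : ∀ k, A k ∈ Copies L)
    (hdec : ∀ k, copyLE (A (k + 1)) (A k)) :
    ∃ B ∈ Copies L, ∀ k, copyLE B (A k) := by
  classical
  have hLi : ∀ i, ∃ Lii : ℕ → Set L, i ≤ n → IsOmegaSumH (P i) Lii := by
    intro i
    by_cases hi : i ≤ n
    · obtain ⟨Lii, h⟩ := hsum i hi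
      exact ⟨Lii, fun _ => h⟩
    · exact ⟨fun _ => ∅, fun h => absurd h hi⟩
  choose Lif hLif using hLi
  exact S15.Setup.exists_B (L := L) (n := n)
    ⟨P, Lif, hcover, hdisj, hlt, fun i hi => hLif i hi, hnH⟩ A hA hdec
end
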